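/- arXiv:2407.15256 — 8 statements merged into one kernel-verified Lean document; each statement's English description precedes it below -/
import Mathlib

section
/- Let X be an n×m real matrix and Z an n×k real matrix such that M_Z X has full column rank m, where P_Z = Z(Z^T Z)^† Z^T and M_Z = Id_n − P_Z. Let λ₁ be the smallest eigenvalue of (X^T M_Z X)^{-1} X^T X. Then the matrix M(κ) := X^T (κ P_Z + (1−κ) Id_n) X is positive definite if and only if κ < λ₁; it is singular positive semi-definite if and only if κ = λ₁; and it has at least one negative eigenvalue if and only if κ > λ₁. -/
open Matrix
open scoped MatrixOrder

/-!
With `B := Xᵀ (1 - P) X`, positive definite because `(1 - P) X` is injective, the matrix in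
question is `M(κ) = XᵀX - κ B`. Writing `B = Rᴴ R` with `R` invertible gives
`M(κ) = Rᴴ (S - κ) R` for the symmetric `S = R⁻ᴴ XᵀX R⁻¹`, and an eigenvector `w` of `S` yields the
eigenvector `R⁻¹ w` of `B⁻¹ XᵀX` with the same eigenvalue. Hence `M(λ₁)` is positive
semidefinite, and singular because an eigenvector `v` for `λ₁` lies in its kernel. Finally
`M(κ) = M(λ₁) + (λ₁ - κ) B` is positive definite for `κ < λ₁`, while
`vᵀ M(κ) v = (λ₁ - κ) vᵀ B v < 0` for `κ > λ₁`.
-/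

namespace Matrix

theorem mulVec_injective_of_rank_eq_card {ι κ K : Type*} [Fintype κ] [Field K]
    {A : Matrix ι κ K} (h : A.rank = Fintype.card κ) : Function.Injective A.mulVec := by
  have hker : Module.finrank K (LinearMap.ker A.mulVecLin) = 0 := by
    have := A.mulVecLin.finrank_range_add_finrank_ker
    rw [Module.finrank_fintype_fun_eq_card] at this
    change A.rank + _ = _ at this
    omega
  rw [← coe_mulVecLin, ← LinearMap.ker_eq_bot]
  exact Submodule.finrank_eq_zero.mp hker

theorem posDef_transpose_mul_mul_of_rank_eq_card {ι κ : Type*} [Fintype ι] [Fintype κ]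
    {Q : Matrix ι ι ℝ} (hQ : Q.IsSymm) (hQQ : Q * Q = Q) (X : Matrix ι κ ℝ)
    (h : (Q * X).rank = Fintype.card κ) : (Xᵀ * Q * X).PosDef := by
  have hfac : Xᵀ * Q * X = (Q * X)ᴴ * (Q * X) := by
    rw [conjTranspose_eq_transpose_of_trivial, transpose_mul, hQ.eq,
      Matrix.mul_assoc Xᵀ Q (Q * X), ← Matrix.mul_assoc Q, hQQ, Matrix.mul_assoc]
  rw [hfac]
  exact PosDef.conjTranspose_mul_self _ (mulVec_injective_of_rank_eq_card h)

section Pencil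

variable {ι : Type*} {G B : Matrix ι ι ℝ} {lam c : ℝ}

theorem posSemidef_sub_smul_of_le (hlam : (G - lam • B).PosSemidef) (hB : B.PosSemidef)
    (hc : c ≤ lam) : (G - c • B).PosSemidef := by
  rw [show G - c • B = (G - lam • B) + (lam - c) • B by module]
  exact hlam.add (hB.smul (sub_nonneg.mpr hc))

theorem posDef_sub_smul_of_lt (hlam : (G - lam • B).PosSemidef) (hB : B.PosDef)
    (hc : c < lam) : (G - c • B).PosDef := by
  rw [show G - c • B = (G - lam • B) + (lam - c) • B by module]
  exact PosDef.posSemidef_add hlam (hB.smul (sub_pos.mpr hc))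

variable [Fintype ι]

theorem dotProduct_sub_smul_mulVec_of_mulVec_eq {v : ι → ℝ} (hv : G *ᵥ v = lam • B *ᵥ v) :
    v ⬝ᵥ (G - c • B) *ᵥ v = (lam - c) * (v ⬝ᵥ B *ᵥ v) := by
  rw [sub_mulVec, smul_mulVec, hv, dotProduct_sub, dotProduct_smul, dotProduct_smul,
    smul_eq_mul, smul_eq_mul, sub_mul]

variable [DecidableEq ι]

theorem PosDef.posSemidef_sub_smul_of_forall_le (hB : B.PosDef) (hG : G.IsHermitian)
    (hc : ∀ μ : ℝ, (∃ v : ι → ℝ, v ≠ 0 ∧ (B⁻¹ * G) *ᵥ v = μ • v) → c ≤ μ) :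
    (G - c • B).PosSemidef := by
  obtain ⟨R, hR, rfl⟩ :=
    CStarAlgebra.isStrictlyPositive_iff_eq_star_mul_self.mp hB.isStrictlyPositive
  rw [star_eq_conjTranspose] at hc ⊢
  have hRdet : IsUnit R.det := (isUnit_iff_isUnit_det R).mp hR
  have hRinv : R⁻¹ * R = 1 := nonsing_inv_mul R hRdet
  have hRinv' : R * R⁻¹ = 1 := mul_nonsing_inv R hRdet
  set S := R⁻¹ᴴ * G * R⁻¹ with hSdef
  have hT : (S - c • 1).IsHermitian := by
    refine IsHermitian.sub ?_ (isHermitian_one.smul (IsSelfAdjoint.all c))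
    simp only [hSdef, IsHermitian, conjTranspose_mul, conjTranspose_conjTranspose, hG.eq,
      Matrix.mul_assoc]
  have hfac : G - c • (Rᴴ * R) = Rᴴ * (S - c • 1) * R := by
    have hRinvH : Rᴴ * R⁻¹ᴴ = 1 := by rw [← conjTranspose_mul, hRinv, conjTranspose_one]
    calc G - c • (Rᴴ * R) = (Rᴴ * R⁻¹ᴴ) * G * (R⁻¹ * R) - c • (Rᴴ * R) := by
          rw [hRinvH, hRinv, Matrix.one_mul, Matrix.mul_one]
      _ = Rᴴ * (S - c • 1) * R := by
          simp only [hSdef, Matrix.mul_sub, Matrix.sub_mul, Matrix.mul_smul, Matrix.smul_mul,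
            Matrix.mul_one, Matrix.mul_assoc]
  have htransfer : ∀ (μ : ℝ) (w : ι → ℝ), S *ᵥ w = μ • w →
      ((Rᴴ * R)⁻¹ * G) *ᵥ (R⁻¹ *ᵥ w) = μ • (R⁻¹ *ᵥ w) := by
    intro μ w hw
    have : (Rᴴ * R)⁻¹ * G * R⁻¹ = R⁻¹ * S := by
      rw [Matrix.mul_inv_rev, ← conjTranspose_nonsing_inv, hSdef]
      simp only [Matrix.mul_assoc]
    rw [mulVec_mulVec, this, ← mulVec_mulVec, hw, mulVec_smul]
  rw [hfac]
  refine (hT.posSemidef_iff_eigenvalues_nonneg.mpr fun i => ?_).conjTranspose_mul_mul_same R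
  set w : ι → ℝ := ⇑(hT.eigenvectorBasis i)
  have hw0 : w ≠ 0 := fun h =>
    hT.eigenvectorBasis.orthonormal.ne_zero i (by ext j; exact congrFun h j)
  have hSw : S *ᵥ w = (hT.eigenvalues i + c) • w := by
    have := hT.mulVec_eigenvectorBasis i
    rw [sub_mulVec, smul_mulVec, one_mulVec, sub_eq_iff_eq_add] at this
    rw [add_smul, this]
  have hRw : R⁻¹ *ᵥ w ≠ 0 := fun h => hw0 <| by
    simpa [mulVec_mulVec, hRinv'] using congrArg (R *ᵥ ·) h
  have := hc _ ⟨_, hRw, htransfer _ w hSw⟩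
  simp only [Pi.zero_apply]
  linarith

theorem definiteness_sub_smul_iff (hB : B.PosDef) (hG : G.IsHermitian)
    (hEig : ∃ v : ι → ℝ, v ≠ 0 ∧ (B⁻¹ * G) *ᵥ v = lam • v)
    (hMin : ∀ μ : ℝ, (∃ v : ι → ℝ, v ≠ 0 ∧ (B⁻¹ * G) *ᵥ v = μ • v) → lam ≤ μ) (c : ℝ) :
    ((G - c • B).PosDef ↔ c < lam) ∧
    ((G - c • B).PosSemidef ∧ (G - c • B).det = 0 ↔ c = lam) ∧
    ((∃ v : ι → ℝ, v ≠ 0 ∧ v ⬝ᵥ (G - c • B) *ᵥ v < 0) ↔ lam < c) := by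
  obtain ⟨v, hv0, hv⟩ := hEig
  have hGv : G *ᵥ v = lam • B *ᵥ v := calc
    G *ᵥ v = B *ᵥ ((B⁻¹ * G) *ᵥ v) := by
      rw [mulVec_mulVec, mul_nonsing_inv_cancel_left _ _ ((isUnit_iff_isUnit_det B).mp hB.isUnit)]
    _ = lam • B *ᵥ v := by rw [hv, mulVec_smul]
  have hlam : (G - lam • B).PosSemidef := hB.posSemidef_sub_smul_of_forall_le hG hMin
  have hdet : (G - lam • B).det = 0 :=
    exists_mulVec_eq_zero_iff.mp ⟨v, hv0, by rw [sub_mulVec, smul_mulVec, hGv, sub_self]⟩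
  have hBv : 0 < v ⬝ᵥ B *ᵥ v := by simpa using hB.dotProduct_mulVec_pos hv0
  have hquad (c : ℝ) : v ⬝ᵥ (G - c • B) *ᵥ v = (lam - c) * (v ⬝ᵥ B *ᵥ v) :=
    dotProduct_sub_smul_mulVec_of_mulVec_eq hGv
  have hle_of_psd {c : ℝ} (h : (G - c • B).PosSemidef) : c ≤ lam := by
    have := h.dotProduct_mulVec_nonneg v
    simp only [star_trivial, hquad] at this
    nlinarith
  refine ⟨⟨fun h => ?_, posDef_sub_smul_of_lt hlam hB⟩, ⟨fun ⟨hpsd, hsing⟩ => ?_, ?_⟩,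
    ⟨fun ⟨w, _, hw⟩ => ?_, fun h => ⟨v, hv0, ?_⟩⟩⟩
  · exact (hle_of_psd h.posSemidef).lt_of_ne fun hc => h.det_pos.ne' (hc ▸ hdet)
  · exact (hle_of_psd hpsd).eq_of_not_lt fun hlt =>
      (posDef_sub_smul_of_lt hlam hB hlt).det_pos.ne' hsing
  · rintro rfl
    exact ⟨hlam, hdet⟩
  · refine lt_of_not_ge fun hc => hw.not_ge ?_
    simpa using (posSemidef_sub_smul_of_le hlam hB.posSemidef hc).dotProduct_mulVec_nonneg w
  · rw [hquad]; nlinarith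

end Pencil

end Matrix

theorem stmt_0_general {n m : ℕ}
    (X : Matrix (Fin n) (Fin m) ℝ)
    (P : Matrix (Fin n) (Fin n) ℝ)
    (hPsymm : P.IsSymm) (hPidem : P * P = P)
    (hrank : ((1 - P) * X).rank = m)
    (lam1 : ℝ)
    (hEig : ∃ v : Fin m → ℝ, v ≠ 0 ∧
      ((Xᵀ * (1 - P) * X)⁻¹ * (Xᵀ * X)) *ᵥ v = lam1 • v)
    (hMin : ∀ μ : ℝ, (∃ v : Fin m → ℝ, v ≠ 0 ∧
      ((Xᵀ * (1 - P) * X)⁻¹ * (Xᵀ * X)) *ᵥ v = μ • v) → lam1 ≤ μ)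
    (κ : ℝ) :
    ((Xᵀ * (κ • P + (1 - κ) • (1 : Matrix (Fin n) (Fin n) ℝ)) * X).PosDef ↔ κ < lam1) ∧
    (((Xᵀ * (κ • P + (1 - κ) • (1 : Matrix (Fin n) (Fin n) ℝ)) * X).PosSemidef ∧
      (Xᵀ * (κ • P + (1 - κ) • (1 : Matrix (Fin n) (Fin n) ℝ)) * X).det = 0) ↔ κ = lam1) ∧
    ((∃ v : Fin m → ℝ, v ≠ 0 ∧
      v ⬝ᵥ (Xᵀ * (κ • P + (1 - κ) • (1 : Matrix (Fin n) (Fin n) ℝ)) * X) *ᵥ v < 0) ↔ lam1 < κ) := by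
  have hQsymm : (1 - P).IsSymm := by
    rw [IsSymm, transpose_sub, transpose_one, hPsymm.eq]
  have hQidem : (1 - P) * (1 - P) = 1 - P := by
    rw [Matrix.sub_mul, Matrix.mul_sub, Matrix.mul_sub, hPidem, Matrix.one_mul, Matrix.mul_one,
      Matrix.one_mul, sub_self, sub_zero]
  have hB := posDef_transpose_mul_mul_of_rank_eq_card hQsymm hQidem X (by simpa using hrank)
  have hG : (Xᵀ * X).IsHermitian := by
    simpa [conjTranspose_eq_transpose_of_trivial] using isHermitian_conjTranspose_mul_self X
  have hM : Xᵀ * (κ • P + (1 - κ) • 1) * X = Xᵀ * X - κ • (Xᵀ * (1 - P) * X) := by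
    rw [show κ • P + (1 - κ) • (1 : Matrix (Fin n) (Fin n) ℝ) = 1 - κ • (1 - P) by module,
      Matrix.mul_sub, Matrix.mul_one, Matrix.sub_mul, Matrix.mul_smul, Matrix.smul_mul]
  rw [hM]
  exact definiteness_sub_smul_iff hB hG hEig hMin κ

/-- characterization of definiteness of `M(κ) = Xᵀ(κ P_Z + (1-κ) Id) X`
in terms of the smallest eigenvalue `λ₁` of `(Xᵀ M_Z X)⁻¹ Xᵀ X`, where `P` is the
orthogonal projection onto the column span of `Z` and `M_Z X` has full column rank. -/
theorem stmt_0 {n m k : ℕ}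
    (X : Matrix (Fin n) (Fin m) ℝ) (Z : Matrix (Fin n) (Fin k) ℝ)
    (P : Matrix (Fin n) (Fin n) ℝ)
    (hPsymm : P.IsSymm) (hPidem : P * P = P) (hPZ : P * Z = Z)
    (hPrange : ∃ C : Matrix (Fin k) (Fin n) ℝ, P = Z * C)
    (hrank : ((1 - P) * X).rank = m)
    (lam1 : ℝ)
    (hEig : ∃ v : Fin m → ℝ, v ≠ 0 ∧
      ((Xᵀ * (1 - P) * X)⁻¹ * (Xᵀ * X)) *ᵥ v = lam1 • v)
    (hMin : ∀ μ : ℝ, (∃ v : Fin m → ℝ, v ≠ 0 ∧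
      ((Xᵀ * (1 - P) * X)⁻¹ * (Xᵀ * X)) *ᵥ v = μ • v) → lam1 ≤ μ)
    (κ : ℝ) :
    ((Xᵀ * (κ • P + (1 - κ) • (1 : Matrix (Fin n) (Fin n) ℝ)) * X).PosDef ↔ κ < lam1) ∧
    (((Xᵀ * (κ • P + (1 - κ) • (1 : Matrix (Fin n) (Fin n) ℝ)) * X).PosSemidef ∧
      (Xᵀ * (κ • P + (1 - κ) • (1 : Matrix (Fin n) (Fin n) ℝ)) * X).det = 0) ↔ κ = lam1) ∧
    ((∃ v : Fin m → ℝ, v ≠ 0 ∧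
      v ⬝ᵥ (Xᵀ * (κ • P + (1 - κ) • (1 : Matrix (Fin n) (Fin n) ℝ)) * X) *ᵥ v < 0) ↔ lam1 < κ) :=
  stmt_0_general X P hPsymm hPidem hrank lam1 hEig hMin κ
end

section
/- Let X ∈ ℝ^{n×m}, y ∈ ℝ^n, Z ∈ ℝ^{n×k}, and κ < 1 + λ_min((X^T M_Z X)^{-1} X^T P_Z X), where M_Z X has full column rank. Then the function β ↦ κ‖P_Z(y − Xβ)‖² + (1−κ)‖y − Xβ‖² is strictly convex on ℝ^m, and its unique minimizer is β̂_k(κ) = (X^T(κP_Z + (1−κ)Id)X)^{-1} X^T(κP_Z + (1−κ)Id)y. -/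
/-!
With `B = Xᵀ M_Z X`, `C = Xᵀ P_Z X` and the weight `A = κ P_Z + (1 - κ) Id`, the objective is the
quadratic form `r ↦ rᵀ A r` of the residual `r = y - Xβ`, whose Hessian is
`Xᵀ A X = C + (1 - κ) B = (C - λ B) + (1 + λ - κ) B`. Since `λ` is the least eigenvalue of
`B⁻¹ C`, the matrix `C - λ B` is positive semidefinite, and `B` is positive definite because
`M_Z X` has full column rank; so for `κ < 1 + λ` the Hessian is positive definite. Completing the
square around the solution `β̂_k(κ)` of the normal equations writes the objective as
`(β - β̂)ᵀ Xᵀ A X (β - β̂) + const`.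
-/

open Matrix

namespace Matrix

variable {m n : Type*} [Fintype n]

theorem mulVec_injective_of_rank_eq {R : Type*} [Field R] {M : Matrix m n R}
    (h : M.rank = Fintype.card n) : Function.Injective M.mulVec :=
  mulVec_injective_iff.mpr <| linearIndependent_iff_card_eq_finrank_span.mpr <| by
    rw [← h, rank_eq_finrank_span_cols]; rfl

theorem transpose_mul_mul_eq_of_isIdempotentElem {P : Matrix n n ℝ} (hPs : P.IsSymm)
    (hPi : IsIdempotentElem P) (X : Matrix n m ℝ) : Xᵀ * P * X = (P * X)ᵀ * (P * X) := by
  rw [transpose_mul, hPs.eq, ← Matrix.mul_assoc, Matrix.mul_assoc Xᵀ P P, hPi.eq]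

theorem dotProduct_mulVec_self_eq_of_isIdempotentElem {P : Matrix n n ℝ} (hPs : P.IsSymm)
    (hPi : IsIdempotentElem P) (r : n → ℝ) : (P *ᵥ r) ⬝ᵥ (P *ᵥ r) = r ⬝ᵥ P *ᵥ r := by
  rw [← dotProduct_transpose_mulVec, hPs.eq, mulVec_mulVec, hPi.eq]

theorem posDef_transpose_mul_mul_of_rank_eq [Fintype m] {P : Matrix n n ℝ} (hPs : P.IsSymm)
    (hPi : IsIdempotentElem P) {X : Matrix n m ℝ} (hX : (P * X).rank = Fintype.card m) :
    (Xᵀ * P * X).PosDef := by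
  rw [transpose_mul_mul_eq_of_isIdempotentElem hPs hPi]
  exact PosDef.conjTranspose_mul_self _ (mulVec_injective_of_rank_eq hX)

theorem dotProduct_mulVec_comm {A : Matrix n n ℝ} (hA : A.IsSymm) (u v : n → ℝ) :
    u ⬝ᵥ A *ᵥ v = v ⬝ᵥ A *ᵥ u := by
  rw [← dotProduct_transpose_mulVec, hA.eq]

theorem dotProduct_mulVec_sub_mulVec [Fintype m] {A : Matrix n n ℝ} (hA : A.IsSymm)
    (X : Matrix n m ℝ) {r : n → ℝ} (hr : (Xᵀ * A) *ᵥ r = 0) (d : m → ℝ) :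
    (r - X *ᵥ d) ⬝ᵥ A *ᵥ (r - X *ᵥ d) = d ⬝ᵥ (Xᵀ * A * X) *ᵥ d + r ⬝ᵥ A *ᵥ r := by
  have hcross : (X *ᵥ d) ⬝ᵥ A *ᵥ r = 0 := by
    rw [dotProduct_comm, ← dotProduct_transpose_mulVec, mulVec_mulVec, hr, dotProduct_zero]
  have hquad : (X *ᵥ d) ⬝ᵥ A *ᵥ (X *ᵥ d) = d ⬝ᵥ (Xᵀ * A * X) *ᵥ d := by
    rw [dotProduct_comm, ← dotProduct_transpose_mulVec, mulVec_mulVec, mulVec_mulVec]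
  simp only [mulVec_sub, dotProduct_sub, sub_dotProduct]
  rw [dotProduct_mulVec_comm hA r (X *ᵥ d), hcross, hquad]
  ring

theorem dotProduct_mulVec_convex_combination {W : Matrix n n ℝ} (hW : W.IsSymm) (x y : n → ℝ)
    {a b : ℝ} (hab : a + b = 1) :
    a * (x ⬝ᵥ W *ᵥ x) + b * (y ⬝ᵥ W *ᵥ y) - (a • x + b • y) ⬝ᵥ W *ᵥ (a • x + b • y)
      = a * b * ((x - y) ⬝ᵥ W *ᵥ (x - y)) := by
  obtain rfl : b = 1 - a := by linarith
  simp only [mulVec_add, mulVec_sub, mulVec_smul, dotProduct_add, dotProduct_sub,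
    add_dotProduct, sub_dotProduct, dotProduct_smul, smul_dotProduct, smul_eq_mul]
  rw [dotProduct_mulVec_comm hW y x]
  ring

theorem PosDef.strictConvexOn_dotProduct_mulVec {W : Matrix n n ℝ} (hW : W.PosDef) :
    StrictConvexOn ℝ Set.univ fun x : n → ℝ => x ⬝ᵥ W *ᵥ x := by
  refine ⟨convex_univ, fun x _ y _ hxy a b ha hb hab => ?_⟩
  have hpos : 0 < (x - y) ⬝ᵥ W *ᵥ (x - y) := by
    simpa using hW.dotProduct_mulVec_pos (sub_ne_zero.mpr hxy)
  have := dotProduct_mulVec_convex_combination (isHermitian_iff_isSymm.mp hW.isHermitian) x y hab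
  simp only [smul_eq_mul]
  nlinarith [mul_pos (mul_pos ha hb) hpos]

theorem PosDef.strictConvexOn_dotProduct_mulVec_sub_add {W : Matrix n n ℝ} (hW : W.PosDef)
    (c : n → ℝ) (e : ℝ) :
    StrictConvexOn ℝ Set.univ fun x : n → ℝ => (x - c) ⬝ᵥ W *ᵥ (x - c) + e := by
  have h := (hW.strictConvexOn_dotProduct_mulVec.translate_left (-c)).add_const e
  rw [Set.preimage_univ] at h
  exact h

section Loewner

variable [DecidableEq n]

theorem PosDef.exists_isUnit_isHermitian_mul_self_eq {B : Matrix n n ℝ} (hB : B.PosDef) :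
    ∃ R : Matrix n n ℝ, IsUnit R ∧ R.IsHermitian ∧ R * R = B := by
  open scoped MatrixOrder in
  have hRR : CFC.sqrt B * CFC.sqrt B = B := CFC.sqrt_mul_sqrt_self B hB.posSemidef.nonneg
  exact ⟨CFC.sqrt B, isUnit_of_mul_isUnit_left (hRR ▸ hB.isUnit),
    (CFC.sqrt_nonneg B).posSemidef.isHermitian, hRR⟩

/-- With `B = R * R`, the symmetric matrix `R⁻¹ C R⁻¹` is similar to `B⁻¹ C` (an eigenvector `u`
of the former gives the eigenvector `R⁻¹ u` of the latter), so its eigenvalues are `≥ lam`, and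
`C - lam • B = R (R⁻¹ C R⁻¹ - lam • 1) R`. -/
theorem PosDef.posSemidef_sub_smul_of_le_eigenvalues {B C : Matrix n n ℝ} (hB : B.PosDef)
    (hC : C.IsHermitian) {lam : ℝ}
    (hmin : ∀ μ : ℝ, (∃ v : n → ℝ, v ≠ 0 ∧ (B⁻¹ * C) *ᵥ v = μ • v) → lam ≤ μ) :
    (C - lam • B).PosSemidef := by
  obtain ⟨R, hRu, hRH, rfl⟩ := hB.exists_isUnit_isHermitian_mul_self_eq
  have hRinv : R * R⁻¹ = 1 := mul_nonsing_inv R ((isUnit_iff_isUnit_det R).mp hRu)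
  have hinvR : R⁻¹ * R = 1 := nonsing_inv_mul R ((isUnit_iff_isUnit_det R).mp hRu)
  set T := R⁻¹ * C * R⁻¹ - lam • 1 with hT
  have hTH : T.IsHermitian := by
    refine IsHermitian.sub ?_ (isHermitian_one.smul (IsSelfAdjoint.all lam))
    simpa only [hRH.inv.eq] using isHermitian_conjTranspose_mul_mul R⁻¹ hC
  have hTpsd : T.PosSemidef := by
    refine hTH.posSemidef_iff_eigenvalues_nonneg.mpr fun i => show (0 : ℝ) ≤ _ from ?_
    set ν := hTH.eigenvalues i
    set u : n → ℝ := (hTH.eigenvectorBasis i).ofLp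
    have hu0 : u ≠ 0 := fun h =>
      hTH.eigenvectorBasis.orthonormal.ne_zero i (by ext j; exact congrFun h j)
    have hu : (R⁻¹ * C * R⁻¹) *ᵥ u = (ν + lam) • u := by
      have hTu : T *ᵥ u = ν • u := hTH.mulVec_eigenvectorBasis i
      rw [add_smul, ← hTu, hT, sub_mulVec, smul_mulVec, one_mulVec]
      abel
    have heig : ((R * R)⁻¹ * C) *ᵥ (R⁻¹ *ᵥ u) = (ν + lam) • (R⁻¹ *ᵥ u) := by
      rw [Matrix.mul_inv_rev, mulVec_mulVec, ← mulVec_smul, ← hu, mulVec_mulVec]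
      simp only [Matrix.mul_assoc]
    have hRu0 : R⁻¹ *ᵥ u ≠ 0 := fun h => hu0 <| by
      rw [← one_mulVec u, ← hRinv, ← mulVec_mulVec, h, mulVec_zero]
    linarith [hmin _ ⟨R⁻¹ *ᵥ u, hRu0, heig⟩]
  have hconj : C - lam • (R * R) = Rᴴ * T * R := by
    rw [hRH.eq, hT, Matrix.mul_sub, Matrix.sub_mul, Matrix.mul_smul, Matrix.smul_mul,
      Matrix.mul_one, ← Matrix.mul_assoc, ← Matrix.mul_assoc, hRinv, Matrix.one_mul,
      Matrix.mul_assoc, hinvR, Matrix.mul_one]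
  rw [hconj]
  exact hTpsd.conjTranspose_mul_mul_same R

theorem PosDef.add_smul_of_le_eigenvalues {B C : Matrix n n ℝ} (hB : B.PosDef)
    (hC : C.IsHermitian) {lam : ℝ}
    (hmin : ∀ μ : ℝ, (∃ v : n → ℝ, v ≠ 0 ∧ (B⁻¹ * C) *ᵥ v = μ • v) → lam ≤ μ)
    {t : ℝ} (ht : -lam < t) : (C + t • B).PosDef := by
  rw [show C + t • B = (C - lam • B) + (lam + t) • B by module]
  exact PosDef.posSemidef_add (hB.posSemidef_sub_smul_of_le_eigenvalues hC hmin)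
    (hB.smul (by linarith))

end Loewner

theorem mulVec_sub_mulVec_weightedLeastSquares_eq_zero [Fintype m] [DecidableEq m]
    {A : Matrix n n ℝ} {X : Matrix n m ℝ} (hW : IsUnit (Xᵀ * A * X)) (y : n → ℝ) :
    (Xᵀ * A) *ᵥ (y - X *ᵥ (((Xᵀ * A * X)⁻¹ * (Xᵀ * A)) *ᵥ y)) = 0 := by
  rw [mulVec_sub, mulVec_mulVec, mulVec_mulVec, ← Matrix.mul_assoc, ← Matrix.mul_assoc,
    mul_nonsing_inv _ ((isUnit_iff_isUnit_det _).mp hW), Matrix.one_mul, sub_self]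

end Matrix

theorem stmt_1_general {n m : ℕ}
    (y : Fin n → ℝ) (X : Matrix (Fin n) (Fin m) ℝ)
    (P : Matrix (Fin n) (Fin n) ℝ)
    (hPsymm : P.IsSymm) (hPidem : P * P = P)
    (hrank : ((1 - P) * X).rank = m)
    (lam : ℝ)
    (hMin : ∀ μ : ℝ, (∃ v : Fin m → ℝ, v ≠ 0 ∧
      ((Xᵀ * (1 - P) * X)⁻¹ * (Xᵀ * P * X)) *ᵥ v = μ • v) → lam ≤ μ)
    (κ : ℝ) (hκ : κ < 1 + lam)
    (f : (Fin m → ℝ) → ℝ)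
    (hf : f = fun β => κ * ((P *ᵥ (y - X *ᵥ β)) ⬝ᵥ (P *ᵥ (y - X *ᵥ β)))
            + (1 - κ) * ((y - X *ᵥ β) ⬝ᵥ (y - X *ᵥ β)))
    (βhat : Fin m → ℝ)
    (hβhat : βhat = ((Xᵀ * (κ • P + (1 - κ) • (1 : Matrix (Fin n) (Fin n) ℝ)) * X)⁻¹ *
        (Xᵀ * (κ • P + (1 - κ) • (1 : Matrix (Fin n) (Fin n) ℝ)))) *ᵥ y) :
    StrictConvexOn ℝ Set.univ f ∧ ∀ β : Fin m → ℝ, β ≠ βhat → f βhat < f β := by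
  set A : Matrix (Fin n) (Fin n) ℝ := κ • P + (1 - κ) • 1
  have hPi : IsIdempotentElem P := hPidem
  have hB : (Xᵀ * (1 - P) * X).PosDef :=
    posDef_transpose_mul_mul_of_rank_eq (isSymm_one.sub hPsymm) hPi.one_sub
      (by rw [hrank, Fintype.card_fin])
  have hC : (Xᵀ * P * X).IsHermitian := by
    simpa using isHermitian_conjTranspose_mul_mul X (isHermitian_iff_isSymm.mpr hPsymm)
  have hW : (Xᵀ * A * X).PosDef := by
    rw [show Xᵀ * A * X = Xᵀ * P * X + (1 - κ) • (Xᵀ * (1 - P) * X) by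
      simp only [A, Matrix.mul_add, Matrix.add_mul, Matrix.mul_sub, Matrix.sub_mul,
        Matrix.mul_smul, Matrix.smul_mul, Matrix.mul_one]
      module]
    exact hB.add_smul_of_le_eigenvalues hC hMin (by linarith)
  have hfA : ∀ β, f β = (y - X *ᵥ β) ⬝ᵥ A *ᵥ (y - X *ᵥ β) := fun β => by
    simp only [hf, A, add_mulVec, smul_mulVec, one_mulVec, dotProduct_add, dotProduct_smul,
      smul_eq_mul, dotProduct_mulVec_self_eq_of_isIdempotentElem hPsymm hPi]
  have hquad : ∀ β, f β = (β - βhat) ⬝ᵥ (Xᵀ * A * X) *ᵥ (β - βhat) + f βhat := fun β => by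
    have hnormal := hβhat ▸ mulVec_sub_mulVec_weightedLeastSquares_eq_zero hW.isUnit y
    rw [hfA, hfA, ← dotProduct_mulVec_sub_mulVec ((hPsymm.smul κ).add (isSymm_one.smul _)) X
      hnormal, mulVec_sub X β βhat, sub_sub_sub_cancel_right]
  refine ⟨?_, fun β hβ => ?_⟩
  · rw [funext hquad]
    exact hW.strictConvexOn_dotProduct_mulVec_sub_add βhat (f βhat)
  · rw [hquad β]
    simpa using hW.dotProduct_mulVec_pos (sub_ne_zero.mpr hβ)

/-- for `κ < 1 + λ_min((Xᵀ M_Z X)⁻¹ Xᵀ P_Z X)`, the k-class objective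
`β ↦ κ‖P_Z(y − Xβ)‖² + (1−κ)‖y − Xβ‖²` is strictly convex with unique minimizer the
k-class estimator `β̂_k(κ)`. -/
theorem stmt_1 {n m k : ℕ}
    (y : Fin n → ℝ) (X : Matrix (Fin n) (Fin m) ℝ) (Z : Matrix (Fin n) (Fin k) ℝ)
    (P : Matrix (Fin n) (Fin n) ℝ)
    (hPsymm : P.IsSymm) (hPidem : P * P = P) (hPZ : P * Z = Z)
    (hPrange : ∃ C : Matrix (Fin k) (Fin n) ℝ, P = Z * C)
    (hrank : ((1 - P) * X).rank = m)
    (lam : ℝ)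
    (hEig : ∃ v : Fin m → ℝ, v ≠ 0 ∧
      ((Xᵀ * (1 - P) * X)⁻¹ * (Xᵀ * P * X)) *ᵥ v = lam • v)
    (hMin : ∀ μ : ℝ, (∃ v : Fin m → ℝ, v ≠ 0 ∧
      ((Xᵀ * (1 - P) * X)⁻¹ * (Xᵀ * P * X)) *ᵥ v = μ • v) → lam ≤ μ)
    (κ : ℝ) (hκ : κ < 1 + lam)
    (f : (Fin m → ℝ) → ℝ)
    (hf : f = fun β => κ * ((P *ᵥ (y - X *ᵥ β)) ⬝ᵥ (P *ᵥ (y - X *ᵥ β)))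
            + (1 - κ) * ((y - X *ᵥ β) ⬝ᵥ (y - X *ᵥ β)))
    (βhat : Fin m → ℝ)
    (hβhat : βhat = ((Xᵀ * (κ • P + (1 - κ) • (1 : Matrix (Fin n) (Fin n) ℝ)) * X)⁻¹ *
        (Xᵀ * (κ • P + (1 - κ) • (1 : Matrix (Fin n) (Fin n) ℝ)))) *ᵥ y) :
    StrictConvexOn ℝ Set.univ f ∧ ∀ β : Fin m → ℝ, β ≠ βhat → f βhat < f β :=
  stmt_1_general y X P hPsymm hPidem hrank lam hMin κ hκ f hf βhat hβhat
end

section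
/- Let u ∈ ℝ^n, X ∈ ℝ^{n×m}, and Z ∈ ℝ^{n×k}, with u^T M_Z u > 0. Define X̃ := X − u · (u^T M_Z X)/(u^T M_Z u). Then the gradient with respect to β, evaluated via u = y − Xβ, of the function β ↦ (y−Xβ)^T P_Z (y−Xβ)/((y−Xβ)^T M_Z (y−Xβ)) equals −2 · X̃^T P_Z u / (u^T M_Z u), i.e., the j-th partial derivative is −2 u^T P_Z X̃_j / (u^T M_Z u) where X̃_j is the j-th column of X̃. -/
/-!
Along the `j`-th coordinate the residual is affine, `y - X (β + s eⱼ) = u - s Xⱼ`, so numerator and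
denominator of the ratio are quadratics in `s`; for symmetric `P` their derivatives at `s = 0`
are `-2 uᵀ P Xⱼ` and `-2 uᵀ M Xⱼ` with `M = 1 - P`. The quotient rule gives
`-2 (uᵀ P Xⱼ - (uᵀ M Xⱼ / uᵀ M u) uᵀ P u) / uᵀ M u`, and the bracket is `uᵀ P X̃ⱼ`.
-/

open Matrix

section

variable {ι R : Type*} [Fintype ι] [CommRing R]

theorem Matrix.IsSymm.dotProduct_mulVec_comm {A : Matrix ι ι R} (hA : A.IsSymm) (u v : ι → R) :
    v ⬝ᵥ A *ᵥ u = u ⬝ᵥ A *ᵥ v := by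
  rw [dotProduct_mulVec, ← mulVec_transpose, hA.eq, dotProduct_comm]

theorem Matrix.IsSymm.dotProduct_mulVec_sub_smul {A : Matrix ι ι R} (hA : A.IsSymm)
    (u c : ι → R) (s : R) :
    (u - s • c) ⬝ᵥ A *ᵥ (u - s • c) =
      u ⬝ᵥ A *ᵥ u - 2 * s * (u ⬝ᵥ A *ᵥ c) + s ^ 2 * (c ⬝ᵥ A *ᵥ c) := by
  simp only [mulVec_sub, mulVec_smul, dotProduct_sub, sub_dotProduct, dotProduct_smul,
    smul_dotProduct, hA.dotProduct_mulVec_comm u c, smul_eq_mul]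
  ring

theorem Matrix.mulVec_update [DecidableEq ι] {κ : Type*} (X : Matrix κ ι R) (β : ι → R)
    (j : ι) (t : R) :
    X *ᵥ Function.update β j t = X *ᵥ β + (t - β j) • Xᵀ j := by
  have hupdate : Function.update β j t = β + Pi.single j (t - β j) := by
    ext l
    rcases eq_or_ne l j with rfl | h <;> simp [Function.update, *]
  rw [hupdate, mulVec_add, mulVec_single]
  ext i
  simp [mul_comm]

end

section

variable {ι : Type*} [Fintype ι]

theorem Matrix.IsSymm.hasDerivAt_dotProduct_mulVec_sub_smul {A : Matrix ι ι ℝ} (hA : A.IsSymm)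
    (u c : ι → ℝ) (t₀ : ℝ) :
    HasDerivAt (fun t => (u - (t - t₀) • c) ⬝ᵥ A *ᵥ (u - (t - t₀) • c))
      (-2 * (u ⬝ᵥ A *ᵥ c)) t₀ := by
  rw [funext fun t => hA.dotProduct_mulVec_sub_smul u c (t - t₀)]
  have hs : HasDerivAt (fun t : ℝ => t - t₀) 1 t₀ := (hasDerivAt_id t₀).sub_const t₀
  refine (((hasDerivAt_const t₀ _).sub ((hs.const_mul 2).mul_const _)).add
    ((hs.pow 2).mul_const _)).congr_deriv ?_
  simp

theorem hasDerivAt_dotProduct_mulVec_div_dotProduct_mulVec {A B : Matrix ι ι ℝ}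
    (hA : A.IsSymm) (hB : B.IsSymm) {u : ι → ℝ} (hu : u ⬝ᵥ B *ᵥ u ≠ 0) (c : ι → ℝ) (t₀ : ℝ) :
    HasDerivAt
      (fun t => (u - (t - t₀) • c) ⬝ᵥ A *ᵥ (u - (t - t₀) • c) /
        ((u - (t - t₀) • c) ⬝ᵥ B *ᵥ (u - (t - t₀) • c)))
      (-2 * (u ⬝ᵥ A *ᵥ (c - ((u ⬝ᵥ B *ᵥ u)⁻¹ * (u ⬝ᵥ B *ᵥ c)) • u)) / (u ⬝ᵥ B *ᵥ u)) t₀ := by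
  refine ((hA.hasDerivAt_dotProduct_mulVec_sub_smul u c t₀).div
    (hB.hasDerivAt_dotProduct_mulVec_sub_smul u c t₀) (by simpa using hu)).congr_deriv ?_
  simp only [sub_self, zero_smul, sub_zero, mulVec_sub, mulVec_smul, dotProduct_sub,
    dotProduct_smul, smul_eq_mul]
  field_simp
  ring

end

theorem stmt_3_general {n m : ℕ}
    (y : Fin n → ℝ) (X : Matrix (Fin n) (Fin m) ℝ)
    (P : Matrix (Fin n) (Fin n) ℝ)
    (hPsymm : P.IsSymm)
    (β : Fin m → ℝ)
    (u : Fin n → ℝ) (hu : u = y - X *ᵥ β)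
    (hden : 0 < u ⬝ᵥ (1 - P) *ᵥ u)
    (Xt : Matrix (Fin n) (Fin m) ℝ)
    (hXt : Xt = X - (u ⬝ᵥ (1 - P) *ᵥ u)⁻¹ • Matrix.vecMulVec u (((1 - P) * X)ᵀ *ᵥ u)) :
    ∀ j : Fin m,
      HasDerivAt (fun t : ℝ =>
        ((y - X *ᵥ Function.update β j t) ⬝ᵥ P *ᵥ (y - X *ᵥ Function.update β j t)) /
        ((y - X *ᵥ Function.update β j t) ⬝ᵥ (1 - P) *ᵥ (y - X *ᵥ Function.update β j t)))
        (-2 * (u ⬝ᵥ P *ᵥ fun i => Xt i j) / (u ⬝ᵥ (1 - P) *ᵥ u)) (β j) := by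
  intro j
  have hresidual (t : ℝ) : y - X *ᵥ Function.update β j t = u - (t - β j) • Xᵀ j := by
    rw [mulVec_update, hu, sub_add_eq_sub_sub]
  have hcoef : (((1 - P) * X)ᵀ *ᵥ u) j = u ⬝ᵥ (1 - P) *ᵥ Xᵀ j := by
    rw [mulVec_transpose, ← vecMul_vecMul, dotProduct_mulVec]
    rfl
  have hcolumn : (fun i => Xt i j) =
      Xᵀ j - ((u ⬝ᵥ (1 - P) *ᵥ u)⁻¹ * (u ⬝ᵥ (1 - P) *ᵥ Xᵀ j)) • u := by
    ext i
    simp only [hXt, Matrix.sub_apply, Matrix.smul_apply, vecMulVec_apply, hcoef, Pi.sub_apply,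
      Pi.smul_apply, transpose_apply, smul_eq_mul]
    ring
  simp only [hresidual, hcolumn]
  exact hasDerivAt_dotProduct_mulVec_div_dotProduct_mulVec hPsymm (isSymm_one.sub hPsymm)
    hden.ne' _ _

/-- the j-th partial derivative of the Anderson–Rubin ratio
`β ↦ (y−Xβ)ᵀ P_Z (y−Xβ) / ((y−Xβ)ᵀ M_Z (y−Xβ))` at `β` equals
`−2 uᵀ P_Z X̃_j / (uᵀ M_Z u)`, where `u = y − Xβ` and
`X̃ = X − u (uᵀ M_Z X)/(uᵀ M_Z u)`. -/
theorem stmt_3 {n m k : ℕ}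
    (y : Fin n → ℝ) (X : Matrix (Fin n) (Fin m) ℝ) (Z : Matrix (Fin n) (Fin k) ℝ)
    (P : Matrix (Fin n) (Fin n) ℝ)
    (hPsymm : P.IsSymm) (hPidem : P * P = P) (hPZ : P * Z = Z)
    (hPrange : ∃ C : Matrix (Fin k) (Fin n) ℝ, P = Z * C)
    (β : Fin m → ℝ)
    (u : Fin n → ℝ) (hu : u = y - X *ᵥ β)
    (hden : 0 < u ⬝ᵥ (1 - P) *ᵥ u)
    (Xt : Matrix (Fin n) (Fin m) ℝ)
    (hXt : Xt = X - (u ⬝ᵥ (1 - P) *ᵥ u)⁻¹ • Matrix.vecMulVec u (((1 - P) * X)ᵀ *ᵥ u)) :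
    ∀ j : Fin m,
      HasDerivAt (fun t : ℝ =>
        ((y - X *ᵥ Function.update β j t) ⬝ᵥ P *ᵥ (y - X *ᵥ Function.update β j t)) /
        ((y - X *ᵥ Function.update β j t) ⬝ᵥ (1 - P) *ᵥ (y - X *ᵥ Function.update β j t)))
        (-2 * (u ⬝ᵥ P *ᵥ fun i => Xt i j) / (u ⬝ᵥ (1 - P) *ᵥ u)) (β j) :=
  stmt_3_general y X P hPsymm β u hu hden Xt hXt
end

section
/- Let β̂_LIML minimize β ↦ (y−Xβ)^T P_Z (y−Xβ) / ((y−Xβ)^T M_Z (y−Xβ)) and assume (y−Xβ̂_LIML)^T M_Z (y−Xβ̂_LIML) > 0. Define X̃ := X − (y − Xβ̂_LIML)·(y − Xβ̂_LIML)^T M_Z X / ((y − Xβ̂_LIML)^T M_Z (y − Xβ̂_LIML)). If X̃^T P_Z X̃ is invertible and 1 + (y − Xβ̂_LIML)^T P_Z Xβ̂_LIML / ((y − Xβ̂_LIML)^T P_Z (y − Xβ̂_LIML)) ≠ 0, then β̂_LIML = (X̃^T P_Z X̃)^{-1} X̃^T P_Z y. -/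
/-!
Write `u = y - Xβ̂`, `N₀ = uᵀPu` and `D₀ = uᵀ(1 - P)u`. Moving `β` along a line through the
minimizer `β̂`, the Anderson–Rubin ratio is a quotient of two quadratics in the line parameter, and
its vanishing derivative gives `D₀ · XᵀPu = N₀ · Xᵀ(1 - P)u`. By the definition of `X̃` this says
exactly `X̃ᵀPu = 0`. Since `X̃β̂` differs from `Xβ̂` by a multiple of `u`, we have
`y = X̃β̂ + c u` for some scalar `c`, so applying `X̃ᵀP` yields the normal equations
`X̃ᵀPX̃ β̂ = X̃ᵀP y`, which are solved by inverting `X̃ᵀPX̃`.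
-/

open Matrix

noncomputable def quadRatio {ι : Type*} [Fintype ι] (P M : Matrix ι ι ℝ) (r : ι → ℝ) : ℝ :=
  (r ⬝ᵥ P *ᵥ r) / (r ⬝ᵥ M *ᵥ r)

theorem IsLocalMin.hasDerivAt_mul_eq_of_div {N D : ℝ → ℝ} {N' D' t : ℝ}
    (hmin : IsLocalMin (fun s => N s / D s) t) (hN : HasDerivAt N N' t) (hD : HasDerivAt D D' t)
    (hDt : D t ≠ 0) : N' * D t = N t * D' := by
  have h := hmin.hasDerivAt_eq_zero (hN.div hD hDt)
  rwa [div_eq_zero_iff, or_iff_left (pow_ne_zero 2 hDt), sub_eq_zero] at h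

section

variable {ι κ : Type*} [Fintype ι]

theorem hasDerivAt_dotProduct_mulVec_add_smul {Q : Matrix ι ι ℝ} (hQ : Q.IsSymm) (u w : ι → ℝ) :
    HasDerivAt (fun t : ℝ => (u + t • w) ⬝ᵥ Q *ᵥ (u + t • w)) (2 * (u ⬝ᵥ Q *ᵥ w)) 0 := by
  have hsymm : w ⬝ᵥ Q *ᵥ u = u ⬝ᵥ Q *ᵥ w := by
    rw [dotProduct_mulVec, ← mulVec_transpose, hQ.eq, dotProduct_comm]
  have hexpand : (fun t : ℝ => (u + t • w) ⬝ᵥ Q *ᵥ (u + t • w)) =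
      fun t => u ⬝ᵥ Q *ᵥ u + t * (2 * (u ⬝ᵥ Q *ᵥ w)) + t ^ 2 * (w ⬝ᵥ Q *ᵥ w) := by
    ext t
    simp only [add_dotProduct, dotProduct_add, mulVec_add, mulVec_smul, smul_dotProduct,
      dotProduct_smul, smul_eq_mul, hsymm]
    ring
  rw [hexpand]
  refine ((((hasDerivAt_id (0 : ℝ)).mul_const (2 * (u ⬝ᵥ Q *ᵥ w))).const_add
    (u ⬝ᵥ Q *ᵥ u)).add ((hasDerivAt_pow 2 (0 : ℝ)).mul_const (w ⬝ᵥ Q *ᵥ w))).congr_deriv ?_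
  simp

theorem firstOrder_of_forall_quadRatio_le_add_smul {P M : Matrix ι ι ℝ} (hP : P.IsSymm)
    (hM : M.IsSymm) {u w : ι → ℝ} (hden : u ⬝ᵥ M *ᵥ u ≠ 0)
    (hmin : ∀ t : ℝ, quadRatio P M u ≤ quadRatio P M (u + t • w)) :
    (u ⬝ᵥ P *ᵥ w) * (u ⬝ᵥ M *ᵥ u) = (u ⬝ᵥ P *ᵥ u) * (u ⬝ᵥ M *ᵥ w) := by
  have hlocal : IsLocalMin (fun t : ℝ => quadRatio P M (u + t • w)) 0 :=
    Filter.Eventually.of_forall fun t => by simpa using hmin t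
  have h := hlocal.hasDerivAt_mul_eq_of_div (hasDerivAt_dotProduct_mulVec_add_smul hP u w)
    (hasDerivAt_dotProduct_mulVec_add_smul hM u w) (by simpa using hden)
  simp only [zero_smul, add_zero] at h
  linarith

theorem smul_vecMul_eq_of_forall_quadRatio_le [Fintype κ] {P M : Matrix ι ι ℝ} (hP : P.IsSymm)
    (hM : M.IsSymm) (y : ι → ℝ) (X : Matrix ι κ ℝ) (β : κ → ℝ)
    (hmin : ∀ b, quadRatio P M (y - X *ᵥ β) ≤ quadRatio P M (y - X *ᵥ b))
    (u : ι → ℝ) (hu : u = y - X *ᵥ β) (hden : u ⬝ᵥ M *ᵥ u ≠ 0) :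
    (u ⬝ᵥ M *ᵥ u) • (u ᵥ* (P * X)) = (u ⬝ᵥ P *ᵥ u) • (u ᵥ* (M * X)) := by
  refine dotProduct_eq _ _ fun v => ?_
  have hline : ∀ t : ℝ, quadRatio P M u ≤ quadRatio P M (u + t • (X *ᵥ v)) := fun t => by
    have hshift : y - X *ᵥ (β - t • v) = u + t • (X *ᵥ v) := by
      rw [hu, mulVec_sub, mulVec_smul]
      abel
    simpa only [← hu, hshift] using hmin (β - t • v)
  simp only [smul_dotProduct, ← dotProduct_mulVec, ← mulVec_mulVec, smul_eq_mul]
  linarith [firstOrder_of_forall_quadRatio_le_add_smul hP hM hden hline]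

theorem transpose_mulVec_mulVec_eq_zero [Fintype κ] {P M : Matrix ι ι ℝ} (hP : P.IsSymm)
    (X : Matrix ι κ ℝ) (u : ι → ℝ) (hden : u ⬝ᵥ M *ᵥ u ≠ 0)
    (hfoc : (u ⬝ᵥ M *ᵥ u) • (u ᵥ* (P * X)) = (u ⬝ᵥ P *ᵥ u) • (u ᵥ* (M * X)))
    (Xt : Matrix ι κ ℝ) (hXt : Xt = X - (u ⬝ᵥ M *ᵥ u)⁻¹ • vecMulVec u ((M * X)ᵀ *ᵥ u)) :
    Xtᵀ *ᵥ (P *ᵥ u) = 0 := by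
  have hPX : u ᵥ* (P * X) = (u ⬝ᵥ M *ᵥ u)⁻¹ • (u ⬝ᵥ P *ᵥ u) • (u ᵥ* (M * X)) := by
    rw [← hfoc, smul_smul, inv_mul_cancel₀ hden, one_smul]
  rw [mulVec_transpose, ← vecMul_transpose, hP.eq, vecMul_vecMul, hXt, Matrix.mul_sub,
    Matrix.mul_smul, mul_vecMulVec, vecMul_sub, vecMul_smul, vecMul_vecMulVec, hPX,
    mulVec_transpose, dotProduct_mulVec, sub_self]

end

theorem eq_inv_mul_mulVec_of_mulVec_eq_zero {R ι κ : Type*} [CommRing R] [Fintype ι] [Fintype κ]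
    [DecidableEq κ] {A : Matrix κ ι R} {B : Matrix ι κ R} (hdet : IsUnit (A * B).det)
    {u y : ι → R} {β : κ → R} (hu : A *ᵥ u = 0) (c : R) (hy : y = B *ᵥ β + c • u) :
    β = ((A * B)⁻¹ * A) *ᵥ y := by
  rw [hy, mulVec_add, mulVec_smul, ← mulVec_mulVec u, hu, mulVec_zero, smul_zero, add_zero,
    mulVec_mulVec, Matrix.mul_assoc, nonsing_inv_mul _ hdet, one_mulVec]

theorem stmt_8_general {n m : ℕ}
    (y : Fin n → ℝ) (X : Matrix (Fin n) (Fin m) ℝ)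
    (P : Matrix (Fin n) (Fin n) ℝ)
    (hPsymm : P.IsSymm)
    (AR : (Fin m → ℝ) → ℝ)
    (hAR : AR = fun β => ((y - X *ᵥ β) ⬝ᵥ P *ᵥ (y - X *ᵥ β)) /
      ((y - X *ᵥ β) ⬝ᵥ (1 - P) *ᵥ (y - X *ᵥ β)))
    (βhat : Fin m → ℝ) (hmin : ∀ β : Fin m → ℝ, AR βhat ≤ AR β)
    (u : Fin n → ℝ) (hu : u = y - X *ᵥ βhat)
    (hden : 0 < u ⬝ᵥ (1 - P) *ᵥ u)
    (Xt : Matrix (Fin n) (Fin m) ℝ)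
    (hXt : Xt = X - (u ⬝ᵥ (1 - P) *ᵥ u)⁻¹ • Matrix.vecMulVec u (((1 - P) * X)ᵀ *ᵥ u))
    (hinv : IsUnit (Xtᵀ * P * Xt).det) :
    βhat = ((Xtᵀ * P * Xt)⁻¹ * (Xtᵀ * P)) *ᵥ y := by
  have hfoc := smul_vecMul_eq_of_forall_quadRatio_le hPsymm (isSymm_one.sub hPsymm) y X βhat
    (by subst hAR; exact hmin) u hu hden.ne'
  have horth : (Xtᵀ * P) *ᵥ u = 0 := by
    rw [← mulVec_mulVec]
    exact transpose_mulVec_mulVec_eq_zero hPsymm X u hden.ne' hfoc Xt hXt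
  set c := (u ⬝ᵥ (1 - P) *ᵥ u)⁻¹ * (((1 - P) * X)ᵀ *ᵥ u ⬝ᵥ βhat)
  refine eq_inv_mul_mulVec_of_mulVec_eq_zero hinv horth (1 + c) ?_
  have hXtβ : Xt *ᵥ βhat = X *ᵥ βhat - c • u := by
    rw [hXt, sub_mulVec, smul_mulVec, vecMulVec_mulVec, op_smul_eq_smul, smul_smul]
  rw [hXtβ, hu, add_smul, one_smul]
  abel

/-- the LIML estimator, a minimizer of the Anderson–Rubin ratio, is a
two-stage estimator: `β̂_LIML = (X̃ᵀ P_Z X̃)⁻¹ X̃ᵀ P_Z y` where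
`X̃ = X − u (uᵀ M_Z X)/(uᵀ M_Z u)` and `u = y − Xβ̂_LIML`. -/
theorem stmt_8 {n m k : ℕ}
    (y : Fin n → ℝ) (X : Matrix (Fin n) (Fin m) ℝ) (Z : Matrix (Fin n) (Fin k) ℝ)
    (P : Matrix (Fin n) (Fin n) ℝ)
    (hPsymm : P.IsSymm) (hPidem : P * P = P) (hPZ : P * Z = Z)
    (hPrange : ∃ C : Matrix (Fin k) (Fin n) ℝ, P = Z * C)
    (AR : (Fin m → ℝ) → ℝ)
    (hAR : AR = fun β => ((y - X *ᵥ β) ⬝ᵥ P *ᵥ (y - X *ᵥ β)) /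
      ((y - X *ᵥ β) ⬝ᵥ (1 - P) *ᵥ (y - X *ᵥ β)))
    (βhat : Fin m → ℝ) (hmin : ∀ β : Fin m → ℝ, AR βhat ≤ AR β)
    (u : Fin n → ℝ) (hu : u = y - X *ᵥ βhat)
    (hden : 0 < u ⬝ᵥ (1 - P) *ᵥ u)
    (Xt : Matrix (Fin n) (Fin m) ℝ)
    (hXt : Xt = X - (u ⬝ᵥ (1 - P) *ᵥ u)⁻¹ • Matrix.vecMulVec u (((1 - P) * X)ᵀ *ᵥ u))
    (hinv : IsUnit (Xtᵀ * P * Xt).det)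
    (heta : 1 + (u ⬝ᵥ P *ᵥ (X *ᵥ βhat)) / (u ⬝ᵥ P *ᵥ u) ≠ 0) :
    βhat = ((Xtᵀ * P * Xt)⁻¹ * (Xtᵀ * P)) *ᵥ y :=
  stmt_8_general y X P hPsymm AR hAR βhat hmin u hu hden Xt hXt hinv
end

section
/- Let y ∈ ℝ^n, X ∈ ℝ^{n×m}, Z ∈ ℝ^{n×k}. Let β̂_LIML minimize β ↦ AR̃(β) := (y−Xβ)^T P_Z (y−Xβ)/((y−Xβ)^T M_Z (y−Xβ)) and write κ̂_LIML = 1 + AR̃(β̂_LIML). Then for every β ∈ ℝ^m, (n−k)(AR̃(β) − AR̃(β̂_LIML))·(y−Xβ)^T M_Z(y−Xβ)/(n−k) equals (β̂_LIML − β)^T X^T (κ̂_LIML P_Z − (κ̂_LIML − 1) Id_n) X (β̂_LIML − β); equivalently, the likelihood-ratio statistic equals the Wald statistic at β̂_LIML with the variance estimated as (y−Xβ)^T M_Z(y−Xβ)/(n−k) instead of ‖y − Xβ̂_LIML‖²/(n−m). -/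
open Matrix

lemma quad_foc (b s : ℝ) (h : ∀ t : ℝ, 0 ≤ 2 * t * b + t ^ 2 * s) : b = 0 := by
  by_contra hb
  have hb2 : 0 < b ^ 2 := by positivity
  set c : ℝ := (|s| + 1)⁻¹ with hc
  have hcpos : 0 < c := by positivity
  have hcs : c * (|s| + 1) = 1 := by rw [hc]; field_simp
  have hsle : s ≤ |s| := le_abs_self s
  have h0 := h (-b * c)
  nlinarith [mul_pos hb2 hcpos, mul_pos (mul_pos hb2 hcpos) hcpos]


/-- the likelihood-ratio statistic equals a Wald-type quadratic form around
the LIML estimator: for all `β`,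
`(AR̃(β) − AR̃(β̂))·(y−Xβ)ᵀM_Z(y−Xβ) = (β̂−β)ᵀ Xᵀ(κ̂ P_Z − (κ̂−1) Id)X (β̂−β)`,
where `κ̂ = 1 + AR̃(β̂)` and `β̂` minimizes the Anderson–Rubin ratio `AR̃`. -/
theorem stmt_9 {n m k : ℕ}
    (y : Fin n → ℝ) (X : Matrix (Fin n) (Fin m) ℝ) (Z : Matrix (Fin n) (Fin k) ℝ)
    (P : Matrix (Fin n) (Fin n) ℝ)
    (hPsymm : P.IsSymm) (hPidem : P * P = P) (hPZ : P * Z = Z)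
    (hPrange : ∃ C : Matrix (Fin k) (Fin n) ℝ, P = Z * C)
    (AR : (Fin m → ℝ) → ℝ)
    (hAR : AR = fun β => ((y - X *ᵥ β) ⬝ᵥ P *ᵥ (y - X *ᵥ β)) /
      ((y - X *ᵥ β) ⬝ᵥ (1 - P) *ᵥ (y - X *ᵥ β)))
    (βhat : Fin m → ℝ) (hmin : ∀ β : Fin m → ℝ, AR βhat ≤ AR β)
    (hden : ∀ β : Fin m → ℝ, (y - X *ᵥ β) ⬝ᵥ (1 - P) *ᵥ (y - X *ᵥ β) ≠ 0)
    (κhat : ℝ) (hκ : κhat = 1 + AR βhat) :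
    ∀ β : Fin m → ℝ,
      (AR β - AR βhat) * ((y - X *ᵥ β) ⬝ᵥ (1 - P) *ᵥ (y - X *ᵥ β)) =
        (βhat - β) ⬝ᵥ (Xᵀ * (κhat • P - (κhat - 1) • (1 : Matrix (Fin n) (Fin n) ℝ)) * X)
          *ᵥ (βhat - β) := by
  intro β
  have hPt : Pᵀ = P := hPsymm
  set M : Matrix (Fin n) (Fin n) ℝ := 1 - P with hMdef
  have hMt : Mᵀ = M := by rw [hMdef, transpose_sub, transpose_one, hPt]
  have hMM : M * M = M := by
    rw [hMdef]; simp [Matrix.mul_sub, Matrix.sub_mul, hPidem]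
  -- vecMul = mulVec for symmetric matrices
  have hvm : ∀ (A : Matrix (Fin n) (Fin n) ℝ), Aᵀ = A → ∀ w : Fin n → ℝ,
      w ᵥ* A = A *ᵥ w := by
    intro A hA w
    nth_rewrite 1 [← hA]
    exact Matrix.vecMul_transpose A w
  have swap : ∀ (A : Matrix (Fin n) (Fin n) ℝ), Aᵀ = A → ∀ x z : Fin n → ℝ,
      x ⬝ᵥ A *ᵥ z = z ⬝ᵥ A *ᵥ x := by
    intro A hA x z
    rw [Matrix.dotProduct_mulVec, hvm A hA, dotProduct_comm]
  -- nonnegativity of the M-quadratic form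
  have hDnn : ∀ w : Fin n → ℝ, 0 ≤ w ⬝ᵥ M *ᵥ w := by
    intro w
    have h1 : w ⬝ᵥ M *ᵥ w = (M *ᵥ w) ⬝ᵥ (M *ᵥ w) := by
      conv_lhs => rw [← hMM, ← Matrix.mulVec_mulVec, Matrix.dotProduct_mulVec, hvm M hMt]
    rw [h1, dotProduct]
    exact Finset.sum_nonneg fun i _ => mul_self_nonneg _
  set uh : Fin n → ℝ := y - X *ᵥ βhat with huh
  set v : Fin n → ℝ := X *ᵥ (βhat - β) with hv
  set a : ℝ := AR βhat with ha
  have hDhat : uh ⬝ᵥ M *ᵥ uh ≠ 0 := hden βhat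
  have hQhat : uh ⬝ᵥ P *ᵥ uh = a * (uh ⬝ᵥ M *ᵥ uh) := by
    rw [ha, hAR]
    exact (div_mul_cancel₀ _ hDhat).symm
  -- expansion identity
  have hexp : ∀ t : ℝ, (uh + t • v) ⬝ᵥ P *ᵥ (uh + t • v)
      - a * ((uh + t • v) ⬝ᵥ M *ᵥ (uh + t • v))
      = (uh ⬝ᵥ P *ᵥ uh - a * (uh ⬝ᵥ M *ᵥ uh))
        + 2 * t * (uh ⬝ᵥ P *ᵥ v - a * (uh ⬝ᵥ M *ᵥ v))
        + t ^ 2 * (v ⬝ᵥ P *ᵥ v - a * (v ⬝ᵥ M *ᵥ v)) := by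
    intro t
    have h1 := swap P hPt v uh
    have h2 := swap M hMt v uh
    simp only [Matrix.mulVec_add, Matrix.mulVec_smul, dotProduct_add, add_dotProduct,
      dotProduct_smul, smul_dotProduct, smul_eq_mul, h1, h2]
    ring
  have hconst : uh ⬝ᵥ P *ᵥ uh - a * (uh ⬝ᵥ M *ᵥ uh) = 0 := by rw [hQhat]; ring
  -- nonnegativity along the line through βhat
  have key : ∀ t : ℝ, 0 ≤ (uh + t • v) ⬝ᵥ P *ᵥ (uh + t • v)
      - a * ((uh + t • v) ⬝ᵥ M *ᵥ (uh + t • v)) := by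
    intro t
    have hu : y - X *ᵥ (βhat - t • (βhat - β)) = uh + t • v := by
      simp only [huh, hv, Matrix.mulVec_sub, Matrix.mulVec_smul]
      module
    have hD := hden (βhat - t • (βhat - β))
    rw [hu] at hD
    have hDpos : 0 < (uh + t • v) ⬝ᵥ M *ᵥ (uh + t • v) :=
      lt_of_le_of_ne (hDnn _) (Ne.symm hD)
    have hle := hmin (βhat - t • (βhat - β))
    rw [hAR] at hle
    simp only at hle
    rw [hu] at hle
    have := (le_div_iff₀ hDpos).mp hle
    linarith
  have hfoc : uh ⬝ᵥ P *ᵥ v - a * (uh ⬝ᵥ M *ᵥ v) = 0 := by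
    refine quad_foc _ (v ⬝ᵥ P *ᵥ v - a * (v ⬝ᵥ M *ᵥ v)) fun t => ?_
    have h0 := key t
    rw [hexp t, hconst] at h0
    linarith
  -- rewrite u(β) = uh + v
  have huβ : y - X *ᵥ β = uh + v := by
    simp only [huh, hv, Matrix.mulVec_sub]
    module
  -- LHS = Q(β) - a·D(β)
  have hDβ := hden β
  rw [huβ] at hDβ
  have hLHS : (AR β - a) * ((uh + v) ⬝ᵥ M *ᵥ (uh + v))
      = (uh + v) ⬝ᵥ P *ᵥ (uh + v) - a * ((uh + v) ⬝ᵥ M *ᵥ (uh + v)) := by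
    rw [hAR]
    simp only
    rw [huβ, sub_mul, div_mul_cancel₀ _ hDβ]
  -- RHS computation
  have hRHS : (βhat - β) ⬝ᵥ (Xᵀ * (κhat • P - (κhat - 1) • (1 : Matrix (Fin n) (Fin n) ℝ)) * X)
        *ᵥ (βhat - β)
      = κhat * (v ⬝ᵥ P *ᵥ v) - (κhat - 1) * (v ⬝ᵥ v) := by
    rw [← Matrix.mulVec_mulVec, ← Matrix.mulVec_mulVec, Matrix.dotProduct_mulVec,
      Matrix.vecMul_transpose, ← hv, Matrix.sub_mulVec, Matrix.smul_mulVec,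
      Matrix.smul_mulVec, Matrix.one_mulVec, dotProduct_sub, dotProduct_smul,
      dotProduct_smul, smul_eq_mul, smul_eq_mul]
  have hvM : v ⬝ᵥ M *ᵥ v = v ⬝ᵥ v - v ⬝ᵥ P *ᵥ v := by
    rw [hMdef, Matrix.sub_mulVec, Matrix.one_mulVec, dotProduct_sub]
  have h1 := hexp 1
  rw [one_smul] at h1
  rw [huβ, hLHS, hRHS, h1, hconst, hfoc, hvM, hκ]
  ring
end

section
/- Let S ∈ ℝ^{n×m}, y ∈ ℝ^n, Z ∈ ℝ^{n×k}, with S^T M_Z S positive definite and (S y)^T M_Z (S y) positive definite. If λ_min(S^T(P_Z − (κ−1)M_Z)S) ≥ 0 > λ_min((S y)^T(P_Z − (κ−1)M_Z)(S y)) for some κ ∈ ℝ, then det((S y)^T(P_Z − (κ−1)M_Z)(S y)) ≤ 0, and consequently the Schur complement s(κ) := y^T(Id − κM_Z)y − y^T(Id − κM_Z)S(S^T(Id − κM_Z)S)^{-1}S^T(Id − κM_Z)y satisfies s(κ) ≤ 0. -/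
open Matrix

/-!
`Sᵀ A S` is positive semidefinite and invertible, hence positive definite, so by the Schur
complement criterion the bordered matrix `(S y)ᵀ A (S y)` is positive semidefinite iff its Schur
complement `s(κ)` is nonnegative. It has a negative direction, so `s(κ) < 0`, and
`det ((S y)ᵀ A (S y)) = det (Sᵀ A S) · s(κ) < 0`.
-/

namespace Matrix

variable {α n m o : Type*} [Fintype n]

theorem fromCols_transpose_mul_mul_fromCols [CommRing α] {A : Matrix n n α} (hA : A.IsSymm)
    (S : Matrix n m α) (T : Matrix n o α) :
    (fromCols S T)ᵀ * A * fromCols S T =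
      fromBlocks (Sᵀ * A * S) (Sᵀ * A * T) (Sᵀ * A * T)ᵀ (Tᵀ * A * T) := by
  rw [transpose_fromCols, fromRows_mul, fromRows_mul_fromCols, transpose_mul, transpose_mul,
    hA.eq, transpose_transpose]
  simp only [Matrix.mul_assoc]

theorem transpose_replicateCol_mul_mul_replicateCol_apply [CommSemiring α] (x z : n → α)
    (M : Matrix n n α) (i j : o) :
    ((replicateCol o x)ᵀ * M * replicateCol o z) i j = x ⬝ᵥ M *ᵥ z := by
  rw [transpose_replicateCol, Matrix.mul_assoc, ← replicateCol_mulVec,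
    replicateRow_mul_replicateCol_apply]

variable [Fintype m] [DecidableEq m] [Unique o]

theorem schur_apply_neg_of_not_posSemidef_fromBlocks {C : Matrix m m ℝ} (hC : C.PosDef)
    (B : Matrix m o ℝ) (D : Matrix o o ℝ) (h : ¬ (fromBlocks C B Bᵀ D).PosSemidef) :
    (D - Bᵀ * C⁻¹ * B) default default < 0 := by
  have := hC.isUnit.invertible
  rw [← conjTranspose_eq_transpose_of_trivial, PosDef.fromBlocks₁₁ B D hC] at h
  have hdiag : D - Bᴴ * C⁻¹ * B = diagonal fun _ => (D - Bᴴ * C⁻¹ * B) default default := by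
    ext i j
    simp [Unique.eq_default i, Unique.eq_default j]
  rw [hdiag, posSemidef_diagonal_iff] at h
  simpa using h

theorem det_fromBlocks_neg_of_not_posSemidef {C : Matrix m m ℝ} (hC : C.PosDef)
    (B : Matrix m o ℝ) (D : Matrix o o ℝ) (h : ¬ (fromBlocks C B Bᵀ D).PosSemidef) :
    (fromBlocks C B Bᵀ D).det < 0 := by
  have := hC.isUnit.invertible
  rw [det_fromBlocks₁₁, det_unique (_ - _), invOf_eq_nonsing_inv]
  exact mul_neg_of_pos_of_neg hC.det_pos (schur_apply_neg_of_not_posSemidef_fromBlocks hC B D h)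

end Matrix

theorem stmt_11_general {n m : ℕ}
    (S : Matrix (Fin n) (Fin m) ℝ) (y : Fin n → ℝ)
    (P : Matrix (Fin n) (Fin n) ℝ)
    (hPsymm : P.IsSymm)
    (Sy : Matrix (Fin n) (Fin m ⊕ Unit) ℝ)
    (hSy : Sy = Matrix.of fun i => Sum.elim (fun j => S i j) (fun _ => y i))
    (κ : ℝ)
    (A : Matrix (Fin n) (Fin n) ℝ)
    (hA : A = (1 : Matrix (Fin n) (Fin n) ℝ) - κ • ((1 : Matrix (Fin n) (Fin n) ℝ) - P))
    (h1 : (Sᵀ * A * S).PosSemidef)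
    (h2 : ∃ v : Fin m ⊕ Unit → ℝ, v ≠ 0 ∧ v ⬝ᵥ (Syᵀ * A * Sy) *ᵥ v < 0)
    (hinv : IsUnit (Sᵀ * A * S).det) :
    (Syᵀ * A * Sy).det ≤ 0 ∧
    y ⬝ᵥ A *ᵥ y - y ⬝ᵥ A *ᵥ (S *ᵥ (((Sᵀ * A * S)⁻¹ * (Sᵀ * A)) *ᵥ y)) ≤ 0 := by
  have hAsymm : A.IsSymm := by
    rw [hA]
    exact isSymm_one.sub ((isSymm_one.sub hPsymm).smul κ)
  have hC : (Sᵀ * A * S).PosDef := h1.posDef_iff_isUnit.mpr ((isUnit_iff_isUnit_det _).mpr hinv)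
  have hSy' : Sy = fromCols S (replicateCol Unit y) := by
    rw [hSy]
    ext i (j | j) <;> rfl
  have hnot : ¬ (Syᵀ * A * Sy).PosSemidef := by
    obtain ⟨v, -, hv⟩ := h2
    exact fun h => hv.not_ge (by simpa using h.dotProduct_mulVec_nonneg v)
  rw [hSy', fromCols_transpose_mul_mul_fromCols hAsymm] at hnot ⊢
  refine ⟨(det_fromBlocks_neg_of_not_posSemidef hC _ _ hnot).le, ?_⟩
  have hschur : (replicateCol Unit y)ᵀ * A * replicateCol Unit y -
      (Sᵀ * A * replicateCol Unit y)ᵀ * (Sᵀ * A * S)⁻¹ * (Sᵀ * A * replicateCol Unit y) =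
      (replicateCol Unit y)ᵀ * (A - A * S * (Sᵀ * A * S)⁻¹ * (Sᵀ * A)) * replicateCol Unit y := by
    rw [transpose_mul, transpose_mul, hAsymm.eq, transpose_transpose]
    simp only [Matrix.mul_sub, Matrix.sub_mul, Matrix.mul_assoc]
  have hneg := schur_apply_neg_of_not_posSemidef_fromBlocks hC _ _ hnot
  rw [hschur, transpose_replicateCol_mul_mul_replicateCol_apply] at hneg
  simpa [sub_mulVec, ← mulVec_mulVec, Matrix.mul_assoc] using hneg.le

/-- if `λ_min(Sᵀ(Id−κM_Z)S) ≥ 0 > λ_min((S y)ᵀ(Id−κM_Z)(S y))`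
(encoded through quadratic forms), then `det((S y)ᵀ(Id−κM_Z)(S y)) ≤ 0` and the Schur
complement `s(κ) = yᵀ(Id−κM_Z)y − yᵀ(Id−κM_Z)S(Sᵀ(Id−κM_Z)S)⁻¹Sᵀ(Id−κM_Z)y` is ≤ 0. -/
theorem stmt_11 {n m k : ℕ}
    (S : Matrix (Fin n) (Fin m) ℝ) (y : Fin n → ℝ) (Z : Matrix (Fin n) (Fin k) ℝ)
    (P : Matrix (Fin n) (Fin n) ℝ)
    (hPsymm : P.IsSymm) (hPidem : P * P = P) (hPZ : P * Z = Z)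
    (hPrange : ∃ C : Matrix (Fin k) (Fin n) ℝ, P = Z * C)
    (hSM : (Sᵀ * ((1 : Matrix (Fin n) (Fin n) ℝ) - P) * S).PosDef)
    (Sy : Matrix (Fin n) (Fin m ⊕ Unit) ℝ)
    (hSy : Sy = Matrix.of fun i => Sum.elim (fun j => S i j) (fun _ => y i))
    (hSyM : (Syᵀ * ((1 : Matrix (Fin n) (Fin n) ℝ) - P) * Sy).PosDef)
    (κ : ℝ)
    (A : Matrix (Fin n) (Fin n) ℝ)
    (hA : A = (1 : Matrix (Fin n) (Fin n) ℝ) - κ • ((1 : Matrix (Fin n) (Fin n) ℝ) - P))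
    (h1 : (Sᵀ * A * S).PosSemidef)
    (h2 : ∃ v : Fin m ⊕ Unit → ℝ, v ≠ 0 ∧ v ⬝ᵥ (Syᵀ * A * Sy) *ᵥ v < 0)
    (hinv : IsUnit (Sᵀ * A * S).det) :
    (Syᵀ * A * Sy).det ≤ 0 ∧
    y ⬝ᵥ A *ᵥ y - y ⬝ᵥ A *ᵥ (S *ᵥ (((Sᵀ * A * S)⁻¹ * (Sᵀ * A)) *ᵥ y)) ≤ 0 :=
  stmt_11_general S y P hPsymm Sy hSy κ A hA h1 h2 hinv
end

section
/- Let W ∈ ℝ^{n×m_w}, Z ∈ ℝ^{n×k}, ε ∈ ℝ^n, and Ω with σ²_ε > 0. Define W̃ := W − ε·Ω_{ε,V_W}/σ²_ε (for some fixed row vector Ω_{ε,V_W} ∈ ℝ^{1×m_w}), assume W̃^T P_Z W̃ is invertible, set η := (Ω_{ε,V_W}/σ²_ε)(W̃^T P_Z W̃)^{-1} W̃^T P_Z ε and assume 1 + η ≠ 0. Define γ⋆ := γ₀ + (W̃^T P_Z W̃)^{-1} W̃^T P_Z ε / (1 + η), where y − Xβ₀ − Wγ₀ = ε. Then (1 +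 η)·P_Z(y − Xβ₀ − Wγ⋆) = P_Z M_{P_Z W̃} ε, and hence (y − Xβ₀ − Wγ⋆)^T P_Z (y − Xβ₀ − Wγ⋆) = ε^T P_Z M_{P_Z W̃} P_Z ε / (1+η)². -/
open Matrix

lemma vecMulVec_mulVec' {n m : ℕ} (ε : Fin n → ℝ) (ω b : Fin m → ℝ) :
    (Matrix.vecMulVec ε ω) *ᵥ b = (ω ⬝ᵥ b) • ε := by
  ext i
  simp only [Matrix.mulVec, Matrix.vecMulVec_apply, dotProduct, Pi.smul_apply,
    smul_eq_mul, Finset.sum_mul, Finset.mul_sum]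
  exact Finset.sum_congr rfl fun x _ => by ring

/-- the key algebraic identity in the subvector Anderson–Rubin proof:
`(1+η)·P_Z(y − Xβ₀ − Wγ⋆) = P_Z M_{P_Z W̃} ε` and hence
`(y − Xβ₀ − Wγ⋆)ᵀ P_Z (y − Xβ₀ − Wγ⋆) = εᵀ P_Z M_{P_Z W̃} P_Z ε / (1+η)²`. -/
theorem stmt_12 {n mx mw k : ℕ}
    (W : Matrix (Fin n) (Fin mw) ℝ) (Z : Matrix (Fin n) (Fin k) ℝ) (ε : Fin n → ℝ)
    (P : Matrix (Fin n) (Fin n) ℝ)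
    (hPsymm : P.IsSymm) (hPidem : P * P = P) (hPZ : P * Z = Z)
    (hPrange : ∃ C : Matrix (Fin k) (Fin n) ℝ, P = Z * C)
    (σ2 : ℝ) (hσ : 0 < σ2) (ω : Fin mw → ℝ)
    (Wt : Matrix (Fin n) (Fin mw) ℝ)
    (hWt : Wt = W - σ2⁻¹ • Matrix.vecMulVec ε ω)
    (hinv : IsUnit (Wtᵀ * P * Wt).det)
    (η : ℝ)
    (hη : η = σ2⁻¹ * (ω ⬝ᵥ (((Wtᵀ * P * Wt)⁻¹ * (Wtᵀ * P)) *ᵥ ε)))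
    (hne : 1 + η ≠ 0)
    (y : Fin n → ℝ) (X : Matrix (Fin n) (Fin mx) ℝ)
    (β₀ : Fin mx → ℝ) (γ₀ : Fin mw → ℝ)
    (hy : y - X *ᵥ β₀ - W *ᵥ γ₀ = ε)
    (γs : Fin mw → ℝ)
    (hγ : γs = γ₀ + (1 + η)⁻¹ • (((Wtᵀ * P * Wt)⁻¹ * (Wtᵀ * P)) *ᵥ ε))
    (MPW : Matrix (Fin n) (Fin n) ℝ)
    (hMPW : MPW = (1 : Matrix (Fin n) (Fin n) ℝ)
      - (P * Wt) * (Wtᵀ * P * Wt)⁻¹ * (P * Wt)ᵀ) :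
    (1 + η) • (P *ᵥ (y - X *ᵥ β₀ - W *ᵥ γs)) = (P * MPW) *ᵥ ε ∧
    (y - X *ᵥ β₀ - W *ᵥ γs) ⬝ᵥ P *ᵥ (y - X *ᵥ β₀ - W *ᵥ γs)
      = (ε ⬝ᵥ (P * MPW * P) *ᵥ ε) / (1 + η) ^ 2 := by
  have hPsymm' : Pᵀ = P := hPsymm
  set S : Matrix (Fin mw) (Fin mw) ℝ := Wtᵀ * P * Wt with hS
  set b : Fin mw → ℝ := (S⁻¹ * (Wtᵀ * P)) *ᵥ ε with hb
  set Q : Matrix (Fin n) (Fin n) ℝ := P * Wt * S⁻¹ * Wtᵀ * P with hQ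
  -- residual
  have hu : y - X *ᵥ β₀ - W *ᵥ γs = ε - (1 + η)⁻¹ • (W *ᵥ b) := by
    rw [hγ, Matrix.mulVec_add, Matrix.mulVec_smul]
    rw [← hy]; abel
  -- W *ᵥ b = Wt *ᵥ b + η • ε
  have hWb : W *ᵥ b = Wt *ᵥ b + η • ε := by
    have : W = Wt + σ2⁻¹ • Matrix.vecMulVec ε ω := by rw [hWt]; abel
    rw [this, Matrix.add_mulVec, Matrix.smul_mulVec, vecMulVec_mulVec']
    rw [smul_smul, hη, hb]
  -- P*MPW = P - Q
  have hPM : P * MPW = P - Q := by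
    rw [hMPW, Matrix.mul_sub, Matrix.mul_one, Matrix.transpose_mul, hPsymm', hQ]
    rw [show P * (P * Wt * S⁻¹ * (Wtᵀ * P)) = (P * P) * Wt * S⁻¹ * Wtᵀ * P by
      simp only [Matrix.mul_assoc], hPidem]
  have hSsymm : Sᵀ = S := by
    rw [hS]; simp [Matrix.transpose_mul, hPsymm', Matrix.mul_assoc]
  have hSinv : (S⁻¹)ᵀ = S⁻¹ := by rw [Matrix.transpose_nonsing_inv, hSsymm]
  have hQsymm : Qᵀ = Q := by
    rw [hQ]; simp only [Matrix.transpose_mul, Matrix.transpose_transpose, hPsymm', hSinv]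
    simp only [Matrix.mul_assoc]
  have hPQ : P * Q = Q := by
    rw [hQ, show P * (P * Wt * S⁻¹ * Wtᵀ * P) = (P * P) * Wt * S⁻¹ * Wtᵀ * P by
      simp only [Matrix.mul_assoc], hPidem]
  have hQP : Q * P = Q := by
    rw [hQ]; simp only [Matrix.mul_assoc, hPidem]
  have hQQ : Q * Q = Q := by
    have h1 : Q * Q = P * Wt * (S⁻¹ * (Wtᵀ * (P * P) * Wt) * S⁻¹) * (Wtᵀ * P) := by
      rw [hQ]; simp only [Matrix.mul_assoc]
    rw [h1, hPidem, ← hS, Matrix.nonsing_inv_mul _ hinv, Matrix.one_mul, hQ]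
    simp only [Matrix.mul_assoc]
  -- part 1
  have key1 : (1 + η) • (P *ᵥ (y - X *ᵥ β₀ - W *ᵥ γs)) = (P * MPW) *ᵥ ε := by
    rw [hu, Matrix.mulVec_sub, Matrix.mulVec_smul, smul_sub, smul_smul,
      mul_inv_cancel₀ hne, one_smul, hWb, Matrix.mulVec_add, hPM,
      Matrix.sub_mulVec]
    have hQε : Q *ᵥ ε = P *ᵥ (Wt *ᵥ b) := by
      rw [hb, hQ]
      simp only [← Matrix.mulVec_mulVec, Matrix.mul_assoc]
    rw [hQε, Matrix.mulVec_smul, add_smul, one_smul]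
    abel
  refine ⟨key1, ?_⟩
  -- part 2
  set u : Fin n → ℝ := y - X *ᵥ β₀ - W *ᵥ γs with hud
  have hPu : u ⬝ᵥ P *ᵥ u = (P *ᵥ u) ⬝ᵥ (P *ᵥ u) := by
    conv_lhs => rw [← hPidem, ← Matrix.mulVec_mulVec, Matrix.dotProduct_mulVec,
      ← Matrix.mulVec_transpose, hPsymm']
  have hMsq : (P - Q) * (P - Q) = P - Q := by
    rw [Matrix.sub_mul, Matrix.mul_sub, Matrix.mul_sub, hPidem, hPQ, hQP, hQQ]
    abel
  have hPMP : P * MPW * P = P - Q := by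
    rw [hPM, Matrix.sub_mul, hPidem, hQP]
  have hT : (P * MPW)ᵀ = P - Q := by
    rw [hPM, Matrix.transpose_sub, hPsymm', hQsymm]
  have hvv : ((P * MPW) *ᵥ ε) ⬝ᵥ ((P * MPW) *ᵥ ε) = ε ⬝ᵥ (P * MPW * P) *ᵥ ε := by
    rw [hPMP, Matrix.dotProduct_mulVec, ← Matrix.mulVec_transpose, Matrix.mulVec_mulVec,
      hT, hPM, hMsq, dotProduct_comm]
  have h2 : (1 + η) ^ 2 * (u ⬝ᵥ P *ᵥ u) = ε ⬝ᵥ (P * MPW * P) *ᵥ ε := by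
    rw [hPu, ← hvv, ← key1, smul_dotProduct, dotProduct_smul,
      smul_eq_mul, smul_eq_mul]
    ring
  rw [eq_div_iff (pow_ne_zero 2 hne)]
  linarith [h2]
end

section
/- Let q ≥ p > 0 be integers, λ ≥ 0, z > 0, and a := λ/(z + λ) ∈ [0,1). For J ≥ 0, the truncation error of the series (1−a)^{p/2} ∑_{j=0}^∞ (a^j (p/2)_j / j!) F_{χ²(q+2j)}(z+λ) after J+1 terms satisfies (1−a)^{p/2} ∑_{j=J+1}^∞ (a^j (p/2)_j/j!) F_{χ²(q+2j)}(z+λ) ≤ F_{χ²(q+2J+2)}(z+λ) · (a^{J+1}(p/2)_{J+1}/(J+1)!) · (1 + 2/√(−log a)). -/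
/-- Cumulative distribution function of the chi-squared distribution with `d`
degrees of freedom (for `z > 0`). -/
noncomputable def chiSqCDF (d : ℝ) (z : ℝ) : ℝ :=
  ∫ x in Set.Ioc (0 : ℝ) z,
    x ^ (d / 2 - 1) * Real.exp (-x / 2) / (2 ^ (d / 2) * Real.Gamma (d / 2))

/-- Pochhammer symbol `(x)_j = x(x+1)⋯(x+j−1)`. -/
noncomputable def poch (x : ℝ) (j : ℕ) : ℝ := ∏ i ∈ Finset.range j, (x + i)

/-!
The χ² CDFs decrease in the number of degrees of freedom: integrating the derivative of
`x ^ ν * exp (-x / 2)` over `(0, t]` gives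
`F_{d+2}(t) = F_d(t) - t^{d/2} e^{-t/2} / (2^{d/2} Γ(d/2+1))`,
so every CDF in the tail is at most `F_{q+2J+2}`. Pulling the first tail coefficient out, with
`s = p/2` and `m = J+1`, the remaining coefficients `a^l (s+m)_l / (m+1)_l` are dominated termwise
by the binomial coefficients `a^l (s+1/2)_l / l!` as soon as `s ≥ 1/2`, and these sum to
`(1-a)^{-(s+1/2)}`. This leaves the factor `(1-a)^{-1/2} ≤ 1 + 1/√(-log a)`, which follows from
`-a log a ≤ 1 - a` and `√a + √(1-a) ≥ 1`.
-/

open MeasureTheory Set Real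

lemma integrableOn_rpow_mul_exp_neg_half {r : ℝ} (hr : -1 < r) (t : ℝ) :
    IntegrableOn (fun x => x ^ r * exp (-x / 2)) (Ioc 0 t) := by
  refine ((integrableOn_rpow_mul_exp_neg_mul_rpow hr one_pos one_half_pos).mono_set
    Ioc_subset_Ioi_self).congr_fun (fun x _ => ?_) measurableSet_Ioc
  simp only [rpow_one]
  ring_nf

lemma integral_rpow_mul_exp_neg_half_recurrence {ν t : ℝ} (hν : 0 < ν) (ht : 0 < t) :
    ν * (∫ x in Ioc 0 t, x ^ (ν - 1) * exp (-x / 2))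
        - (∫ x in Ioc 0 t, x ^ ν * exp (-x / 2)) / 2 = t ^ ν * exp (-t / 2) := by
  have hI₁ := integrableOn_rpow_mul_exp_neg_half (by linarith : -1 < ν - 1) t
  have hI₂ := integrableOn_rpow_mul_exp_neg_half (by linarith : -1 < ν) t
  have hcont : Continuous fun x : ℝ => exp (-x / 2) := by fun_prop
  rw [← integral_const_mul, ← integral_div, ← integral_sub (hI₁.const_mul ν) (hI₂.div_const 2),
    ← intervalIntegral.integral_of_le ht.le, ← sub_zero (t ^ ν * exp (-t / 2))]
  refine intervalIntegral.integral_eq_sub_of_hasDerivAt_of_tendsto ht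
    (f := fun x => x ^ ν * exp (-x / 2)) (fun x hx => ?_) ?_ ?_ ?_
  · have h := (hasDerivAt_rpow_const (p := ν) (Or.inl hx.1.ne')).mul
      (((hasDerivAt_neg x).div_const 2).exp)
    exact h.congr_deriv (by ring)
  · exact ((intervalIntegrable_iff_integrableOn_Ioc_of_le ht.le).2 (hI₁.const_mul ν)).sub
      ((intervalIntegrable_iff_integrableOn_Ioc_of_le ht.le).2 (hI₂.div_const 2))
  · have h := ((continuousAt_rpow_const 0 ν (Or.inr hν.le)).tendsto.mul
      (hcont.tendsto 0)).mono_left (nhdsWithin_le_nhds (s := Ioi 0))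
    simpa [zero_rpow hν.ne'] using h
  · exact (((continuousAt_rpow_const t ν (Or.inl ht.ne')).tendsto.mul
      (hcont.tendsto t))).mono_left nhdsWithin_le_nhds

lemma chiSqCDF_eq_integral_div (d t : ℝ) :
    chiSqCDF d t = (∫ x in Ioc 0 t, x ^ (d / 2 - 1) * exp (-x / 2))
      / (2 ^ (d / 2) * Gamma (d / 2)) :=
  integral_div _ _

lemma chiSqCDF_add_two {d t : ℝ} (hd : 0 < d) (ht : 0 < t) :
    chiSqCDF (d + 2) t
      = chiSqCDF d t - t ^ (d / 2) * exp (-t / 2) / (2 ^ (d / 2) * Gamma (d / 2 + 1)) := by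
  have hν : 0 < d / 2 := by positivity
  have h := integral_rpow_mul_exp_neg_half_recurrence hν ht
  have hΓ := Gamma_pos_of_pos hν
  rw [chiSqCDF_eq_integral_div, chiSqCDF_eq_integral_div, show (d + 2) / 2 = d / 2 + 1 by ring,
    add_sub_cancel_right, Gamma_add_one hν.ne', rpow_add_one two_ne_zero]
  generalize (∫ x in Ioc 0 t, x ^ (d / 2 - 1) * exp (-x / 2)) = I₀ at h ⊢
  generalize (∫ x in Ioc 0 t, x ^ (d / 2) * exp (-x / 2)) = I₁ at h ⊢
  rw [neg_div] at h
  field_simp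
  linear_combination (-2) * h

lemma chiSqCDF_nonneg {d : ℝ} (hd : 0 < d) (t : ℝ) : 0 ≤ chiSqCDF d t :=
  setIntegral_nonneg measurableSet_Ioc fun x hx => by
    have := Gamma_pos_of_pos (half_pos hd)
    have := hx.1
    positivity

lemma chiSqCDF_add_two_le {d t : ℝ} (hd : 0 < d) (ht : 0 < t) :
    chiSqCDF (d + 2) t ≤ chiSqCDF d t := by
  rw [chiSqCDF_add_two hd ht, sub_le_self_iff]
  have := Gamma_pos_of_pos (by positivity : 0 < d / 2 + 1)
  positivity

lemma chiSqCDF_add_two_mul_le {d t : ℝ} (hd : 0 < d) (ht : 0 < t) (l : ℕ) :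
    chiSqCDF (d + 2 * l) t ≤ chiSqCDF d t := by
  induction l with
  | zero => simp
  | succ l ih =>
    rw [Nat.cast_succ, mul_add_one, ← add_assoc]
    exact (chiSqCDF_add_two_le (by positivity) ht).trans ih

lemma poch_pos {x : ℝ} (hx : 0 < x) (n : ℕ) : 0 < poch x n :=
  Finset.prod_pos fun _ _ => by positivity

lemma poch_nonneg {x : ℝ} (hx : 0 ≤ x) (n : ℕ) : 0 ≤ poch x n :=
  Finset.prod_nonneg fun _ _ => by positivity

lemma poch_add (x : ℝ) (m n : ℕ) : poch x (m + n) = poch x m * poch (x + m) n := by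
  rw [poch, poch, poch, Finset.prod_range_add]
  simp only [Nat.cast_add, add_assoc]

lemma poch_one (n : ℕ) : poch 1 n = n.factorial := by
  rw [poch, ← Finset.prod_range_add_one_eq_factorial]
  push_cast
  simp only [add_comm]

lemma poch_add_mul_factorial_le {s : ℝ} (hs : 1 / 2 ≤ s) (m l : ℕ) :
    poch (s + m) l * l.factorial ≤ poch (s + 1 / 2) l * poch (m + 1) l := by
  rw [← poch_one, poch, poch, poch, poch, ← Finset.prod_mul_distrib, ← Finset.prod_mul_distrib]
  refine Finset.prod_le_prod (fun i _ => by positivity) fun i _ => ?_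
  -- the difference of the two sides is `m (s - 1/2) + (i + 1) / 2`
  nlinarith [mul_nonneg (m.cast_nonneg : (0 : ℝ) ≤ m) (sub_nonneg.2 hs),
    (i.cast_nonneg : (0 : ℝ) ≤ i)]

lemma poch_eq_ascPochhammer_eval (x : ℝ) (n : ℕ) : poch x n = (ascPochhammer ℝ n).eval x := by
  induction n with
  | zero => simp [poch]
  | succ n ih => rw [poch, Finset.prod_range_succ, ← poch, ih, ascPochhammer_succ_right]; simp

lemma ring_choose_eq_poch_div_factorial (r : ℝ) (n : ℕ) :
    Ring.choose (r + n - 1) n = poch r n / n.factorial := by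
  rw [Ring.choose_eq_smul, Polynomial.descPochhammer_smeval_eq_ascPochhammer,
    Polynomial.ascPochhammer_smeval_eq_eval, poch_eq_ascPochhammer_eval, smul_eq_mul]
  ring_nf

lemma hasSum_pow_mul_poch_div_factorial {x : ℝ} (hx : |x| < 1) (r : ℝ) :
    HasSum (fun n => x ^ n * poch r n / n.factorial) ((1 - x) ^ (-r)) := by
  have hx' : x ∈ Metric.eball (0 : ℝ) 1 := by
    rw [Metric.mem_eball, edist_zero_right, enorm_eq_nnnorm, ENNReal.coe_lt_one_iff,
      ← NNReal.coe_lt_one, coe_nnnorm, norm_eq_abs]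
    exact hx
  have h := (one_div_one_sub_rpow_hasFPowerSeriesOnBall_zero r).hasSum hx'
  simp only [FormalMultilinearSeries.ofScalars_apply_eq, zero_add, smul_eq_mul,
    ring_choose_eq_poch_div_factorial] at h
  rw [rpow_neg (by linarith [(abs_lt.1 hx).2]), ← one_div]
  simpa only [mul_comm (x ^ _), mul_div_right_comm] using h

lemma one_sub_rpow_neg_half_le {a : ℝ} (ha0 : 0 ≤ a) (ha1 : a < 1) :
    (1 - a) ^ (-(1 / 2 : ℝ)) ≤ 1 + 1 / √(-log a) := by
  rcases ha0.eq_or_lt with rfl | ha0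
  · simp
  have hu : 0 < √(1 - a) := sqrt_pos.2 (by linarith)
  have hw : 0 < √(-log a) := sqrt_pos.2 (neg_pos.2 (log_neg ha0 ha1))
  have hwv : √(-log a) * √a ≤ √(1 - a) := by
    rw [← sqrt_mul (neg_pos.2 (log_neg ha0 ha1)).le]
    refine sqrt_le_sqrt ?_
    have := one_sub_inv_le_log_of_pos ha0
    have := mul_le_mul_of_nonneg_left this ha0.le
    rw [mul_sub, mul_inv_cancel₀ ha0.ne'] at this
    linarith
  have huv : 1 ≤ √(1 - a) + √a := by
    nlinarith [sq_sqrt (by linarith : 0 ≤ 1 - a), sq_sqrt ha0.le, sqrt_nonneg a]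
  rw [rpow_neg (by linarith), ← sqrt_eq_rpow, inv_le_iff_one_le_mul₀ hu]
  calc 1 ≤ √(1 - a) + √a := huv
    _ ≤ √(1 - a) + √(1 - a) / √(-log a) := by
        gcongr
        rwa [le_div_iff₀ hw, mul_comm]
    _ = (1 + 1 / √(-log a)) * √(1 - a) := by ring

lemma pow_mul_poch_div_factorial_add_le {a s : ℝ} (ha : 0 ≤ a) (hs : 1 / 2 ≤ s) (m l : ℕ) :
    a ^ (m + l) * poch s (m + l) / (m + l).factorial
      ≤ a ^ m * poch s m / m.factorial * (a ^ l * poch (s + 1 / 2) l / l.factorial) := by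
  have hfac : ((m + l).factorial : ℝ) = m.factorial * poch (m + 1) l := by
    rw [← poch_one, poch_add, poch_one, add_comm (1 : ℝ)]
  have hratio : poch (s + m) l / poch (m + 1) l ≤ poch (s + 1 / 2) l / l.factorial := by
    rw [div_le_div_iff₀ (poch_pos (by positivity) l) (by positivity)]
    exact poch_add_mul_factorial_le hs m l
  have hs0 : 0 ≤ s := by linarith
  calc a ^ (m + l) * poch s (m + l) / (m + l).factorial
      = a ^ m * poch s m / m.factorial * (a ^ l * (poch (s + m) l / poch (m + 1) l)) := by
        rw [hfac, poch_add, pow_add]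
        ring
    _ ≤ a ^ m * poch s m / m.factorial * (a ^ l * (poch (s + 1 / 2) l / l.factorial)) := by
        have := poch_nonneg hs0 m
        gcongr
    _ = a ^ m * poch s m / m.factorial * (a ^ l * poch (s + 1 / 2) l / l.factorial) := by
        ring

lemma one_sub_rpow_mul_tsum_tail_le {a s F : ℝ} (ha0 : 0 ≤ a) (ha1 : a < 1) (hs : 1 / 2 ≤ s)
    (m : ℕ) {c : ℕ → ℝ} (hc0 : ∀ l, 0 ≤ c l) (hcF : ∀ l, c l ≤ F) :
    (1 - a) ^ s * ∑' l : ℕ, a ^ (m + l) * poch s (m + l) / (m + l).factorial * c l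
      ≤ F * (a ^ m * poch s m / m.factorial) * (1 - a) ^ (-(1 / 2 : ℝ)) := by
  set head := a ^ m * poch s m / m.factorial
  have hhead : 0 ≤ head := by have := poch_nonneg (by linarith : 0 ≤ s) m; positivity
  have hmaj := (hasSum_pow_mul_poch_div_factorial (abs_lt.2 ⟨by linarith, ha1⟩)
    (s + 1 / 2)).mul_left (F * head)
  have hterm_nonneg (l : ℕ) : 0 ≤ a ^ (m + l) * poch s (m + l) / (m + l).factorial * c l := by
    have := poch_nonneg (by linarith : 0 ≤ s) (m + l)
    have := hc0 l
    positivity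
  have hterm_le (l : ℕ) : a ^ (m + l) * poch s (m + l) / (m + l).factorial * c l
      ≤ F * head * (a ^ l * poch (s + 1 / 2) l / l.factorial) := by
    have := poch_nonneg (by linarith : 0 ≤ s + 1 / 2) l
    calc a ^ (m + l) * poch s (m + l) / (m + l).factorial * c l
        ≤ head * (a ^ l * poch (s + 1 / 2) l / l.factorial) * F :=
          mul_le_mul (pow_mul_poch_div_factorial_add_le ha0 hs m l) (hcF l) (hc0 l)
            (by positivity)
      _ = F * head * (a ^ l * poch (s + 1 / 2) l / l.factorial) := by ring
  have hsum := (hmaj.summable.of_nonneg_of_le hterm_nonneg hterm_le).tsum_le_tsum hterm_le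
    hmaj.summable
  rw [hmaj.tsum_eq] at hsum
  calc (1 - a) ^ s * ∑' l : ℕ, a ^ (m + l) * poch s (m + l) / (m + l).factorial * c l
      ≤ (1 - a) ^ s * (F * head * (1 - a) ^ (-(s + 1 / 2))) := by gcongr
    _ = F * head * ((1 - a) ^ s * (1 - a) ^ (-(s + 1 / 2))) := by ring
    _ = F * head * (1 - a) ^ (-(1 / 2 : ℝ)) := by
        rw [← rpow_add (by linarith)]
        ring_nf

theorem stmt_16_general (p q : ℕ) (hp : 0 < p)
    (lam z : ℝ) (hlam : 0 ≤ lam) (hz : 0 < z)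
    (a : ℝ) (ha : a = lam / (z + lam)) (J : ℕ) :
    (1 - a) ^ ((p : ℝ) / 2) *
      ∑' l : ℕ, a ^ (J + 1 + l) * poch ((p : ℝ) / 2) (J + 1 + l) /
          (Nat.factorial (J + 1 + l)) *
        chiSqCDF ((q : ℝ) + 2 * ((J : ℝ) + 1 + l)) (z + lam)
    ≤ chiSqCDF ((q : ℝ) + 2 * J + 2) (z + lam) *
        (a ^ (J + 1) * poch ((p : ℝ) / 2) (J + 1) / (Nat.factorial (J + 1))) *
        (1 + 2 / Real.sqrt (-Real.log a)) := by
  have ht : 0 < z + lam := by linarith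
  have ha0 : 0 ≤ a := ha ▸ div_nonneg hlam ht.le
  have ha1 : a < 1 := ha ▸ (div_lt_one ht).2 (by linarith)
  have hs : 1 / 2 ≤ (p : ℝ) / 2 := by
    have : (1 : ℝ) ≤ p := by exact_mod_cast hp
    linarith
  have hd : (0 : ℝ) < q + 2 * J + 2 := by positivity
  have hchi (l : ℕ) : chiSqCDF ((q : ℝ) + 2 * ((J : ℝ) + 1 + l)) (z + lam)
      ≤ chiSqCDF ((q : ℝ) + 2 * J + 2) (z + lam) := by
    convert chiSqCDF_add_two_mul_le hd ht l using 2
    ring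
  have hhead : 0 ≤ a ^ (J + 1) * poch ((p : ℝ) / 2) (J + 1) / (Nat.factorial (J + 1)) := by
    have := poch_nonneg (by positivity : (0 : ℝ) ≤ p / 2) (J + 1)
    positivity
  refine (one_sub_rpow_mul_tsum_tail_le ha0 ha1 hs (J + 1)
    (fun l => chiSqCDF_nonneg (by positivity) _) hchi).trans ?_
  have hF := chiSqCDF_nonneg hd (z + lam)
  gcongr
  refine (one_sub_rpow_neg_half_le ha0 ha1).trans ?_
  gcongr
  norm_num

/-- truncation error bound for the power series representation of the
conditional likelihood-ratio critical value function (Hillier's approximation). -/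
theorem stmt_16 (p q : ℕ) (hp : 0 < p) (hpq : p ≤ q)
    (lam z : ℝ) (hlam : 0 ≤ lam) (hz : 0 < z)
    (a : ℝ) (ha : a = lam / (z + lam)) (J : ℕ) :
    (1 - a) ^ ((p : ℝ) / 2) *
      ∑' l : ℕ, a ^ (J + 1 + l) * poch ((p : ℝ) / 2) (J + 1 + l) /
          (Nat.factorial (J + 1 + l)) *
        chiSqCDF ((q : ℝ) + 2 * ((J : ℝ) + 1 + l)) (z + lam)
    ≤ chiSqCDF ((q : ℝ) + 2 * J + 2) (z + lam) *
        (a ^ (J + 1) * poch ((p : ℝ) / 2) (J + 1) / (Nat.factorial (J + 1))) *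
        (1 + 2 / Real.sqrt (-Real.log a)) :=
  stmt_16_general p q hp lam z hlam hz a ha J
end
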